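/- arXiv:math/0003207 — 12 statements merged into one kernel-verified Lean document; each statement's English description precedes it below -/
import Mathlib

section
/- Let V be a finite-dimensional real or complex vector space and ρ an action of a semigroup Γ on V by continuous linear endomorphisms. Then ρ is expansive (i.e., there is a neighborhood U of 0 with ⋂_{γ∈Γ} ρ(γ)⁻¹(U) = {0}) if and only if for every nonzero v ∈ V the orbit {ρ(γ)v : γ ∈ Γ} is unbounded. -/
/-! A bounded orbit can be shrunk by a nonzero scalar into any neighbourhood of `0`; by linearity
the rescaled vector's whole orbit then stays in that neighbourhood, so expansiveness forces it to
vanish. Conversely, if every nonzero orbit is unbounded, the unit ball witnesses expansiveness. -/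

open Set Filter Topology Bornology Pointwise

def IsExpansive {ι E : Type*} [Zero E] [TopologicalSpace E] (f : ι → E → E) : Prop :=
  ∃ U ∈ 𝓝 (0 : E), ∀ v, (∀ i, f i v ∈ U) → v = 0

theorem Absorbs.exists_ne_zero_subset_smul {𝕜 E : Type*} [NontriviallyNormedField 𝕜]
    [SMul 𝕜 E] {A B : Set E} (h : Absorbs 𝕜 A B) : ∃ c : 𝕜, c ≠ 0 ∧ B ⊆ c • A := by
  obtain ⟨r, hr, hrA⟩ := h.exists_pos
  obtain ⟨c, hc⟩ := NormedField.exists_lt_norm 𝕜 r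
  exact ⟨c, norm_pos_iff.1 (hr.trans hc), hrA c hc.le⟩

theorem IsExpansive.not_isVonNBounded_orbit {ι 𝕜 E : Type*} [NontriviallyNormedField 𝕜]
    [AddCommGroup E] [Module 𝕜 E] [TopologicalSpace E] {f : ι → E →ₗ[𝕜] E}
    (hf : IsExpansive fun i => f i) {v : E} (hv : v ≠ 0) :
    ¬ IsVonNBounded 𝕜 (range fun i => f i v) := by
  intro hb
  obtain ⟨U, hU, hexp⟩ := hf
  obtain ⟨c, hc, horbit⟩ := (hb hU).exists_ne_zero_subset_smul
  have hscaled : ∀ i, f i (c⁻¹ • v) ∈ U := fun i => by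
    rw [map_smul, ← mem_smul_set_iff_inv_smul_mem₀ hc]
    exact horbit (mem_range_self i)
  exact hv (by simpa [hc] using hexp _ hscaled)

theorem isExpansive_of_forall_not_isBounded_orbit {ι E : Type*} [PseudoMetricSpace E] [Zero E]
    {f : ι → E → E} (hf : ∀ v, v ≠ 0 → ¬ IsBounded (range fun i => f i v)) : IsExpansive f :=
  ⟨Metric.ball 0 1, Metric.ball_mem_nhds 0 one_pos, fun v hv => by
    by_contra hv0
    exact hf v hv0 (Metric.isBounded_ball.subset (range_subset_iff.2 hv))⟩

theorem expansive_iff_orbits_unbounded_general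
    {𝕜 V Γ : Type*} [RCLike 𝕜] [NormedAddCommGroup V] [NormedSpace 𝕜 V]
    [Monoid Γ] (ρ : Γ →* (V →L[𝕜] V)) :
    (∃ U ∈ nhds (0 : V), ∀ v : V, (∀ γ : Γ, ρ γ v ∈ U) → v = 0) ↔
      ∀ v : V, v ≠ 0 → ¬ Bornology.IsBounded (Set.range fun γ : Γ => ρ γ v) :=
  ⟨fun hexp _ hv hb => IsExpansive.not_isVonNBounded_orbit (f := fun γ => (ρ γ : V →ₗ[𝕜] V))
      hexp hv ((NormedSpace.isVonNBounded_iff 𝕜).2 hb),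
    isExpansive_of_forall_not_isBounded_orbit⟩

/-- For an endomorphism action `ρ` of a semigroup (with identity) `Γ` on a
finite-dimensional real or complex vector space `V` by continuous linear maps, `ρ` is
expansive (some neighborhood `U` of `0` satisfies `⋂_γ ρ(γ)⁻¹ U = {0}`) iff every nonzero
`v ∈ V` has unbounded orbit `{ρ(γ) v : γ ∈ Γ}`. -/
theorem expansive_iff_orbits_unbounded
    {𝕜 V Γ : Type*} [RCLike 𝕜] [NormedAddCommGroup V] [NormedSpace 𝕜 V]
    [FiniteDimensional 𝕜 V] [Monoid Γ] (ρ : Γ →* (V →L[𝕜] V)) :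
    (∃ U ∈ nhds (0 : V), ∀ v : V, (∀ γ : Γ, ρ γ v ∈ U) → v = 0) ↔
      ∀ v : V, v ≠ 0 → ¬ Bornology.IsBounded (Set.range fun γ : Γ => ρ γ v) :=
  expansive_iff_orbits_unbounded_general ρ
end

section
/- Let V be a finite-dimensional real vector space and ρ an endomorphism action of a semigroup Γ on V. Then ρ is expansive if and only if the induced action of Γ on the complexification V ⊗ ℂ is expansive. -/
/-- An endomorphism action `ρ` of a semigroup `Γ` on a finite-dimensional
real vector space `V` is expansive iff the induced action `γ ↦ ρ(γ) ⊗ 1` on the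
complexification `V ⊗ ℂ` is expansive.  We realise the complexification, as a real
topological vector space, as `V × V` (with `i • (x, y) = (-y, x)`); under this standard
identification the induced action `ρ(γ) ⊗ 1` is `(x, y) ↦ (ρ(γ) x, ρ(γ) y)`. -/
theorem expansive_iff_complexification_expansive
    {V Γ : Type*} [NormedAddCommGroup V] [NormedSpace ℝ V]
    [FiniteDimensional ℝ V] [Monoid Γ] (ρ : Γ →* (V →L[ℝ] V)) :
    (∃ U ∈ nhds (0 : V), ∀ v : V, (∀ γ : Γ, ρ γ v ∈ U) → v = 0) ↔
      (∃ U ∈ nhds (0 : V × V), ∀ w : V × V,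
        (∀ γ : Γ, (ρ γ w.1, ρ γ w.2) ∈ U) → w = 0) := by
  constructor
  · rintro ⟨U, hU, hexp⟩
    refine ⟨U ×ˢ U, prod_mem_nhds hU hU, ?_⟩
    intro w hw
    have h1 : w.1 = 0 := hexp w.1 fun γ => (hw γ).1
    have h2 : w.2 = 0 := hexp w.2 fun γ => (hw γ).2
    exact Prod.ext h1 h2
  · rintro ⟨U, hU, hexp⟩
    have hcont : Continuous fun x : V => (x, (0 : V)) := by fun_prop
    refine ⟨(fun x : V => (x, (0 : V))) ⁻¹' U, ?_, ?_⟩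
    · exact hcont.continuousAt.preimage_mem_nhds (by simpa [Prod.mk_zero_zero] using hU)
    · intro v hv
      have := hexp (v, 0) fun γ => by simpa using hv γ
      simpa using congrArg Prod.fst this
end

section
/- Let V be a finite-dimensional complex vector space and ρ a reducible endomorphism action of a semigroup Γ on V with generalized weights λ₁, …, λ_k : Γ → ℂ. Then ρ is expansive if and only if for each i the image λ_i(Γ) is an unbounded subset of ℂ. -/
/-- Let `ρ` be a reducible endomorphism action of a semigroup (with
identity) `Γ` on a finite-dimensional complex vector space `V`: `V = W₁ ⊕ ⋯ ⊕ W_k` with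
each `Wᵢ` nontrivial, and for each `i` there are a character `λᵢ : Γ → ℂ` and a basis
`bᵢ` of `Wᵢ` with respect to which `ρ(γ)|_{Wᵢ} − λᵢ(γ)·I` is strictly upper triangular
(encoded: `ρ(γ) bᵢ(l) − λᵢ(γ) • bᵢ(l)` lies in the span of the earlier basis vectors,
which in particular makes each `Wᵢ` invariant).  Then `ρ` is expansive iff each image
`λᵢ(Γ)` is unbounded in `ℂ`. -/
theorem reducible_action_expansive_iff_weights_unbounded
    {V Γ : Type*} [NormedAddCommGroup V] [NormedSpace ℂ V] [FiniteDimensional ℂ V]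
    [Monoid Γ] (ρ : Γ →* (V →L[ℂ] V)) (k : ℕ) (W : Fin k → Submodule ℂ V)
    (hW : ∀ i, W i ≠ ⊥) (hdirect : DirectSum.IsInternal W)
    (lam : Fin k → (Γ →* ℂ)) (n : Fin k → ℕ) (b : ∀ i, Module.Basis (Fin (n i)) ℂ (W i))
    (htri : ∀ (i : Fin k) (γ : Γ) (l : Fin (n i)),
      ρ γ (b i l : V) - lam i γ • (b i l : V) ∈
        Submodule.span ℂ {v : V | ∃ j : Fin (n i), j < l ∧ v = (b i j : V)}) :
    (∃ U ∈ nhds (0 : V), ∀ v : V, (∀ γ : Γ, ρ γ v ∈ U) → v = 0) ↔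
      ∀ i, ¬ Bornology.IsBounded (Set.range fun γ : Γ => lam i γ) := by
  constructor
  · rintro ⟨U, hU, hexp⟩ i hbdd
    -- `n i > 0` since `W i ≠ ⊥`
    have hni : 0 < n i := by
      rcases Nat.eq_zero_or_pos (n i) with h0 | h
      · exfalso
        apply hW i
        ext x
        simp only [Submodule.mem_bot]
        constructor
        · intro hx
          have : (⟨x, hx⟩ : W i) = 0 := by
            have := Module.Basis.mem_span_repr_support (b i) (⟨x, hx⟩ : W i)
            have hempty : ((b i).repr ⟨x, hx⟩).support = (∅ : Finset (Fin (n i))) := by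
              apply Finset.eq_empty_of_forall_notMem
              intro l _
              exact absurd l.2 (by omega)
            rw [hempty] at this
            simpa using this
          exact congrArg Subtype.val this
        · rintro rfl; exact (W i).zero_mem
      · exact h
    obtain ⟨M, hM⟩ := hbdd.exists_norm_le
    set l₁ : Fin (n i) := ⟨0, hni⟩ with hl₁
    have heig : ∀ γ : Γ, ρ γ ((b i l₁ : V)) = lam i γ • (b i l₁ : V) := by
      intro γ
      have h := htri i γ l₁
      have hemp : {v : V | ∃ j : Fin (n i), j < l₁ ∧ v = (b i j : V)} = ∅ := by
        ext v
        simp only [Set.mem_setOf_eq, Set.mem_empty_iff_false, iff_false, not_exists]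
        intro j ⟨hj, _⟩
        exact absurd hj (by simp [hl₁, Fin.lt_def])
      rw [hemp, Submodule.span_empty, Submodule.mem_bot, sub_eq_zero] at h
      exact h
    obtain ⟨ε, hε, hball⟩ := Metric.mem_nhds_iff.mp hU
    have hbne : (b i l₁ : V) ≠ 0 := by
      intro h
      have : (b i l₁ : W i) = 0 := Subtype.ext h
      exact (b i).ne_zero l₁ this
    have hbpos : (0 : ℝ) < ‖(b i l₁ : V)‖ := norm_pos_iff.mpr hbne
    have hM0 : (0 : ℝ) ≤ M := le_trans (norm_nonneg _) (hM _ ⟨1, rfl⟩)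
    set c : ℝ := ε / (2 * (M + 1) * (‖(b i l₁ : V)‖ + 1)) with hc
    have hcpos : 0 < c := by
      apply div_pos hε
      positivity
    have hv0 : (c : ℂ) • (b i l₁ : V) ≠ 0 := by
      simp only [smul_ne_zero_iff]
      exact ⟨by exact_mod_cast hcpos.ne', hbne⟩
    apply hv0
    apply hexp
    intro γ
    apply hball
    have : ρ γ ((c : ℂ) • (b i l₁ : V)) = (c : ℂ) • lam i γ • (b i l₁ : V) := by
      rw [map_smul, heig]
    rw [Metric.mem_ball, dist_zero_right, this]
    have hnorm : ‖(c : ℂ) • lam i γ • (b i l₁ : V)‖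
        = c * (‖lam i γ‖ * ‖(b i l₁ : V)‖) := by
      rw [norm_smul, norm_smul, Complex.norm_real, Real.norm_eq_abs,
        abs_of_pos hcpos]
    rw [hnorm]
    have hlam : ‖lam i γ‖ ≤ M := hM _ ⟨γ, rfl⟩
    have h1 : ‖lam i γ‖ * ‖(b i l₁ : V)‖ ≤ M * ‖(b i l₁ : V)‖ :=
      mul_le_mul_of_nonneg_right hlam (le_of_lt hbpos)
    have h2 : c * (‖lam i γ‖ * ‖(b i l₁ : V)‖) ≤ c * (M * ‖(b i l₁ : V)‖) :=
      mul_le_mul_of_nonneg_left h1 hcpos.le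
    refine lt_of_le_of_lt h2 ?_
    rw [hc, div_mul_eq_mul_div, div_lt_iff₀ (by positivity)]
    refine mul_lt_mul_of_pos_left ?_ hε
    nlinarith [hbpos, hM0, mul_nonneg hM0 hbpos.le]
  · intro hub
    refine ⟨Metric.ball 0 1, Metric.ball_mem_nhds 0 one_pos, fun v hv => ?_⟩
    by_contra hv0
    set B := hdirect.collectedBasis b with hB
    obtain ⟨p, hp⟩ : ∃ p, B.repr v p ≠ 0 := by
      by_contra h
      push_neg at h
      exact hv0 (by simpa using B.repr.map_eq_zero_iff.mp (Finsupp.ext h))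
    obtain ⟨i, pl⟩ := p
    set S : Finset (Fin (n i)) := Finset.univ.filter (fun l => B.repr v ⟨i, l⟩ ≠ 0) with hSdef
    have hS : S.Nonempty := ⟨pl, by simp [hSdef, hp]⟩
    set l₀ : Fin (n i) := S.max' hS with hl₀def
    have hl₀ : B.repr v ⟨i, l₀⟩ ≠ 0 := by
      have := S.max'_mem hS
      simpa [hSdef] using this
    set φL : V →ₗ[ℂ] ℂ := B.coord ⟨i, l₀⟩ with hφL
    -- invariance of each W j
    have hinv : ∀ (j : Fin k) (γ : Γ) (l : Fin (n j)), ρ γ ((b j l : V)) ∈ W j := by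
      intro j γ l
      have h := htri j γ l
      have hsub : Submodule.span ℂ {v : V | ∃ j' : Fin (n j), j' < l ∧ v = (b j j' : V)}
          ≤ W j := by
        rw [Submodule.span_le]
        rintro x ⟨j', _, rfl⟩
        exact (b j j').2
      have h1 : ρ γ ((b j l : V)) - lam j γ • (b j l : V) ∈ W j := hsub h
      have h2 : lam j γ • (b j l : V) ∈ W j := (W j).smul_mem _ (b j l).2
      have := (W j).add_mem h1 h2
      simpa using this
    -- key eigen-relation
    have hkey : ∀ γ : Γ, φL (ρ γ v) = lam i γ * φL v := by
      intro γ
      have hmem : v ∈ LinearMap.ker ((φL ∘ₗ (ρ γ : V →ₗ[ℂ] V)) - lam i γ • φL) := by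
        set s : Set (Σ j : Fin k, Fin (n j)) :=
          {q | q.1 ≠ i ∨ ∃ l : Fin (n i), l ≤ l₀ ∧ q = ⟨i, l⟩} with hs
        have hvspan : v ∈ Submodule.span ℂ (B '' s) := by
          rw [Module.Basis.mem_span_image]
          intro q hq
          simp only [Finset.mem_coe, Finsupp.mem_support_iff] at hq
          obtain ⟨j, l⟩ := q
          by_cases hji : j = i
          · subst hji
            right
            refine ⟨l, ?_, rfl⟩
            exact S.le_max' l (by simp [hSdef, hq])
          · exact Or.inl hji
        refine Submodule.span_le.mpr ?_ hvspan
        rintro x ⟨⟨j, l⟩, hq, rfl⟩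
        simp only [SetLike.mem_coe, LinearMap.mem_ker, LinearMap.sub_apply, LinearMap.comp_apply,
          LinearMap.smul_apply, smul_eq_mul, sub_eq_zero, ContinuousLinearMap.coe_coe]
        rcases hq with hji | ⟨l', hl', heq⟩
        · -- j ≠ i
          have hBjl : B ⟨j, l⟩ = (b j l : V) := by
            rw [hB, hdirect.collectedBasis_coe]
          have hrho : ρ γ (B ⟨j, l⟩) ∈ W j := by rw [hBjl]; exact hinv j γ l
          have h1 : φL (ρ γ (B ⟨j, l⟩)) = 0 := by
            rw [hφL, Module.Basis.coord_apply, hB]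
            exact hdirect.collectedBasis_repr_of_mem_ne b hji hrho
          have h2 : φL (B ⟨j, l⟩) = 0 := by
            rw [hφL, Module.Basis.coord_apply, Module.Basis.repr_self]
            rw [Finsupp.single_apply_eq_zero]
            intro h
            exact absurd (congrArg Sigma.fst h).symm hji
          rw [h1, h2, mul_zero]
        · -- j = i, l ≤ l₀
          obtain ⟨rfl, hl⟩ := Sigma.mk.inj_iff.mp heq
          have hll : l = l' := eq_of_heq hl
          subst hll
          have hBil : B ⟨j, l⟩ = (b j l : V) := by
            rw [hB, hdirect.collectedBasis_coe]
          have hdiff := htri j γ l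
          have hdiffspan : ρ γ ((b j l : V)) - lam j γ • (b j l : V) ∈
              Submodule.span ℂ (B '' (Sigma.mk j '' {m : Fin (n j) | m < l})) := by
            refine Submodule.span_mono ?_ hdiff
            rintro x ⟨m, hm, rfl⟩
            exact ⟨⟨j, m⟩, ⟨m, hm, rfl⟩, by rw [hB, hdirect.collectedBasis_coe]⟩
          have hnotin : (⟨j, l₀⟩ : Σ j' : Fin k, Fin (n j')) ∉
              Sigma.mk j '' {m : Fin (n j) | m < l} := by
            rintro ⟨m, hm, heq2⟩
            have : m = l₀ := by
              have := Sigma.mk.inj_iff.mp heq2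
              exact eq_of_heq this.2
            subst this
            exact absurd (lt_of_lt_of_le hm hl') (lt_irrefl _)
          have hφdiff : φL (ρ γ ((b j l : V)) - lam j γ • (b j l : V)) = 0 := by
            rw [hφL, Module.Basis.coord_apply]
            have hsupp := Module.Basis.repr_support_subset_of_mem_span B _ hdiffspan
            by_contra hne
            exact hnotin (hsupp (Finsupp.mem_support_iff.mpr hne))
          have hexpand : φL (ρ γ (B ⟨j, l⟩)) =
              φL (ρ γ ((b j l : V)) - lam j γ • (b j l : V)) + lam j γ * φL (B ⟨j, l⟩) := by
            rw [hBil]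
            conv_lhs => rw [← sub_add_cancel ((ρ γ) ((b j l : V))) (lam j γ • (b j l : V))]
            rw [map_add, map_smul, smul_eq_mul]
          rw [hexpand, hφdiff, zero_add]
      simpa [sub_eq_zero] using hmem
    -- conclude boundedness of lam i, contradiction
    apply hub i
    set φ : V →L[ℂ] ℂ := LinearMap.toContinuousLinearMap φL with hφ
    have hφv : φL v ≠ 0 := by
      rw [hφL, Module.Basis.coord_apply]; exact hl₀
    rw [isBounded_iff_forall_norm_le]
    refine ⟨‖φ‖ / ‖φL v‖, ?_⟩
    rintro x ⟨γ, rfl⟩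
    have hb1 : ‖φL (ρ γ v)‖ ≤ ‖φ‖ := by
      have h1 : ‖φ (ρ γ v)‖ ≤ ‖φ‖ * ‖ρ γ v‖ := φ.le_opNorm _
      have h2 : ‖ρ γ v‖ ≤ 1 := by
        have := hv γ
        rw [Metric.mem_ball, dist_zero_right] at this
        exact this.le
      have h3 : ‖φ‖ * ‖ρ γ v‖ ≤ ‖φ‖ * 1 := by
        exact mul_le_mul_of_nonneg_left h2 (norm_nonneg _)
      have : φ (ρ γ v) = φL (ρ γ v) := rfl
      rw [← this]
      linarith
    rw [hkey γ] at hb1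
    rw [norm_mul] at hb1
    rw [le_div_iff₀ (norm_pos_iff.mpr hφv)]
    exact hb1
end

section
/- Let V be a finite-dimensional real or complex vector space and T ∈ End(V). The cyclic semigroup {Tⁿ : n ≥ 0} acts expansively on V if and only if every eigenvalue of T (over ℂ) has absolute value strictly greater than 1. -/
open Polynomial

section Aux

lemma aux_charpoly_eval_eq_det {K : Type*} [Field K] {n : Type*} [Fintype n] [DecidableEq n]
    (A : Matrix n n K) (z : K) : A.charpoly.eval z = (z • (1 : Matrix n n K) - A).det := by
  rw [Matrix.charpoly, ← coe_evalRingHom, RingHom.map_det]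
  congr 1
  ext i j
  simp [Matrix.charmatrix_apply, Matrix.one_apply, apply_ite, Matrix.diagonal_apply]

lemma aux_exists_eigvec {K E : Type*} [Field K] [AddCommGroup E] [Module K E]
    [FiniteDimensional K E] (g : E →ₗ[K] E) {z : K} (hz : g.charpoly.IsRoot z) :
    ∃ w : E, w ≠ 0 ∧ g w = z • w := by
  classical
  set b := Module.Free.chooseBasis K E
  have hdet : LinearMap.det (z • (LinearMap.id : E →ₗ[K] E) - g) = 0 := by
    rw [← LinearMap.det_toMatrix b, map_sub, map_smul]
    have : LinearMap.toMatrix b b (LinearMap.id : E →ₗ[K] E) = 1 := LinearMap.toMatrix_id b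
    rw [this, ← aux_charpoly_eval_eq_det, LinearMap.charpoly_def] at *
    exact hz
  obtain ⟨w, hw, hw0⟩ := Submodule.exists_mem_ne_zero_of_ne_bot
    (LinearMap.bot_lt_ker_of_det_eq_zero hdet).ne'
  refine ⟨w, hw0, ?_⟩
  have := LinearMap.mem_ker.mp hw
  simp only [LinearMap.sub_apply, LinearMap.smul_apply, LinearMap.id_apply] at this
  exact (sub_eq_zero.mp this).symm

lemma aux_isRoot_of_eigvec {K E : Type*} [Field K] [AddCommGroup E] [Module K E]
    [FiniteDimensional K E] (g : E →ₗ[K] E) {z : K} {w : E} (hw : w ≠ 0) (h : g w = z • w) :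
    g.charpoly.IsRoot z := by
  have hev : Module.End.HasEigenvalue g z :=
    Module.End.hasEigenvalue_of_hasEigenvector ⟨(Module.End.mem_eigenspace_iff).mpr h, hw⟩
  have := (Module.End.hasEigenvalue_iff_isRoot).mp hev
  exact this.dvd (LinearMap.minpoly_dvd_charpoly g)

variable {𝕜 : Type*} [RCLike 𝕜]

lemma aux_f_ofReal (f : 𝕜 →+* ℂ) (hf : Continuous f) (r : ℝ) : f ((r : 𝕜)) = (r : ℂ) := by
  have hd : DenseRange ((↑) : ℚ → ℝ) := Rat.denseRange_cast
  have h : (fun r : ℝ => f ((r : 𝕜))) = (fun r : ℝ => (r : ℂ)) := by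
    apply hd.equalizer
    · exact hf.comp RCLike.continuous_ofReal
    · exact Complex.continuous_ofReal
    · funext q
      show f ((((q : ℚ) : ℝ) : 𝕜)) = (((q : ℚ) : ℝ) : ℂ)
      rw [show (((q : ℚ) : ℝ) : 𝕜) = ((q : ℚ) : 𝕜) by push_cast; ring, map_ratCast]
      push_cast; ring
  exact congrFun h r

lemma aux_f_I (f : 𝕜 →+* ℂ) (hI : (RCLike.I : 𝕜) * RCLike.I = -1) :
    f RCLike.I = Complex.I ∨ f RCLike.I = -Complex.I := by
  have h2 : f RCLike.I * f RCLike.I = -1 := by rw [← map_mul, hI, map_neg, map_one]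
  have hz : (f RCLike.I - Complex.I) * (f RCLike.I + Complex.I) = 0 := by
    linear_combination h2 - Complex.I_mul_I
  rcases mul_eq_zero.mp hz with h | h
  · exact Or.inl (sub_eq_zero.mp h)
  · exact Or.inr (eq_neg_of_add_eq_zero_left h)

lemma aux_f_abs (f : 𝕜 →+* ℂ) (hf : Continuous f) (x : 𝕜) : ‖f x‖ = ‖x‖ := by
  have hx : ((RCLike.re x : ℝ) : 𝕜) + ((RCLike.im x : ℝ) : 𝕜) * RCLike.I = x := RCLike.re_add_im x
  rcases RCLike.I_mul_I_ax (K := 𝕜) with hI | hI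
  · rw [hI, mul_zero, add_zero] at hx
    rw [← hx, aux_f_ofReal f hf, Complex.norm_real, Real.norm_eq_abs, RCLike.norm_ofReal]
  · have hfx : f x = (RCLike.re x : ℂ) + (RCLike.im x : ℂ) * f RCLike.I := by
      conv_lhs => rw [← hx]
      rw [map_add, map_mul, aux_f_ofReal f hf, aux_f_ofReal f hf]
    have hsq : (‖f x‖)^2 = (RCLike.re x)^2 + (RCLike.im x)^2 := by
      rcases aux_f_I f hI with h | h <;>
        rw [Complex.sq_norm, Complex.normSq_apply, hfx, h] <;> simp <;> ring
    have hn : ‖x‖^2 = (RCLike.re x)^2 + (RCLike.im x)^2 := by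
      rw [RCLike.norm_sq_eq_def]; ring
    nlinarith [norm_nonneg (f x), norm_nonneg x]

lemma aux_f_surj (f : 𝕜 →+* ℂ) (hf : Continuous f)
    (hI : (RCLike.I : 𝕜) * RCLike.I = -1) : Function.Surjective f := by
  intro c
  rcases aux_f_I f hI with h | h
  · refine ⟨(c.re : 𝕜) + (c.im : 𝕜) * RCLike.I, ?_⟩
    rw [map_add, map_mul, aux_f_ofReal f hf, aux_f_ofReal f hf, h]
    exact Complex.re_add_im c
  · refine ⟨(c.re : 𝕜) - (c.im : 𝕜) * RCLike.I, ?_⟩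
    rw [map_sub, map_mul, aux_f_ofReal f hf, aux_f_ofReal f hf, h]
    linear_combination Complex.re_add_im c

/-- Over `ℂ`: if every root of the characteristic polynomial lies strictly outside the
closed unit disk, then a vector with bounded forward orbit is zero. -/
lemma aux_complex_bounded_zero {E : Type*} [NormedAddCommGroup E] [NormedSpace ℂ E]
    [FiniteDimensional ℂ E] (S : E →ₗ[ℂ] E)
    (hroots : ∀ z : ℂ, S.charpoly.IsRoot z → 1 < ‖z‖)
    (w : E) (C : ℝ) (hC : ∀ n : ℕ, ‖(S ^ n) w‖ ≤ C) : w = 0 := by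
  by_contra hw0
  set B : Submodule ℂ E :=
    { carrier := {u | ∃ D : ℝ, ∀ n : ℕ, ‖(S ^ n) u‖ ≤ D}
      add_mem' := by
        rintro a b ⟨Da, ha⟩ ⟨Db, hb⟩
        exact ⟨Da + Db, fun n => by
          rw [map_add]; exact (norm_add_le _ _).trans (add_le_add (ha n) (hb n))⟩
      zero_mem' := ⟨0, fun n => by simp⟩
      smul_mem' := by
        rintro c a ⟨Da, ha⟩
        exact ⟨‖c‖ * Da, fun n => by
          rw [map_smul, norm_smul]
          exact mul_le_mul_of_nonneg_left (ha n) (norm_nonneg c)⟩ } with hB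
  have hSB : ∀ u ∈ B, S u ∈ B := by
    rintro u ⟨D, hD⟩
    exact ⟨D, fun n => by
      rw [show (S ^ n) (S u) = (S ^ (n+1)) u by rw [pow_succ, Module.End.mul_apply]]
      exact hD (n+1)⟩
  have hwB : w ∈ B := ⟨C, hC⟩
  have : Nontrivial B := ⟨⟨⟨w, hwB⟩, 0, by simp [hw0, Subtype.ext_iff]⟩⟩
  obtain ⟨μ, hμ⟩ := Module.End.exists_eigenvalue (S.restrict hSB)
  obtain ⟨u, hu⟩ := hμ.exists_hasEigenvector
  have hu0 : (u : E) ≠ 0 := fun h => hu.2 (Subtype.ext h)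
  have hSu : S (u : E) = μ • (u : E) := by
    have h1 := hu.apply_eq_smul
    have h2 := congrArg (Subtype.val) h1
    rwa [LinearMap.restrict_coe_apply] at h2
  have h1μ : 1 < ‖μ‖ := hroots μ (aux_isRoot_of_eigvec S hu0 hSu)
  obtain ⟨D, hD⟩ := u.2
  have hpow : ∀ n : ℕ, (S ^ n) (u : E) = μ ^ n • (u : E) :=
    (Module.End.HasEigenvector.pow_apply ⟨Module.End.mem_eigenspace_iff.mpr hSu, hu0⟩)
  have hupos : 0 < ‖(u : E)‖ := norm_pos_iff.mpr hu0
  obtain ⟨n, hn⟩ := pow_unbounded_of_one_lt (D / ‖(u : E)‖) h1μ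
  have hDn := hD n
  rw [hpow n, norm_smul, norm_pow] at hDn
  have : D < ‖μ‖ ^ n * ‖(u : E)‖ := (div_lt_iff₀ hupos).mp hn
  linarith

end Aux

/-- Let `V` be a finite-dimensional real or complex vector space and
`T ∈ End(V)`.  The cyclic semigroup `{Tⁿ : n ≥ 0}` acts expansively on `V` iff every
eigenvalue of `T` over `ℂ` (i.e. every complex root of its characteristic polynomial,
transported to `ℂ` along the (essentially unique) continuous ring embedding `𝕜 →+* ℂ`)
has absolute value strictly greater than `1`. -/
theorem cyclic_semigroup_expansive_iff_spectrum_outside_closed_unit_disk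
    {𝕜 V : Type*} [RCLike 𝕜] [NormedAddCommGroup V] [NormedSpace 𝕜 V]
    [FiniteDimensional 𝕜 V] (T : V →L[𝕜] V) (f : 𝕜 →+* ℂ) (hf : Continuous f) :
    (∃ U ∈ nhds (0 : V), ∀ v : V, (∀ n : ℕ, (T ^ n) v ∈ U) → v = 0) ↔
      ∀ z : ℂ, Polynomial.eval₂ f z (LinearMap.charpoly (T : V →ₗ[𝕜] V)) = 0 →
        1 < ‖z‖ := by
  classical
  set d := Module.finrank 𝕜 V with hd
  set b : Module.Basis (Fin d) 𝕜 V := Module.finBasis 𝕜 V with hbdef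
  set M : Matrix (Fin d) (Fin d) 𝕜 := LinearMap.toMatrix b b (T : V →ₗ[𝕜] V) with hM
  set A : Matrix (Fin d) (Fin d) ℂ := M.map f with hA
  set S : (Fin d → ℂ) →ₗ[ℂ] (Fin d → ℂ) := Matrix.toLin' A with hS
  -- characteristic polynomial bookkeeping
  have hcp : S.charpoly = (LinearMap.charpoly (T : V →ₗ[𝕜] V)).map f := by
    have h1 : LinearMap.toMatrix (Pi.basisFun ℂ (Fin d)) (Pi.basisFun ℂ (Fin d)) S = A := by
      rw [hS, ← Matrix.toLin_eq_toLin', LinearMap.toMatrix_toLin]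
    rw [← LinearMap.charpoly_toMatrix S (Pi.basisFun ℂ (Fin d)), h1, hA, Matrix.charpoly_map,
      hM, LinearMap.charpoly_toMatrix]
  have hroot_iff : ∀ z : ℂ,
      (Polynomial.eval₂ f z (LinearMap.charpoly (T : V →ₗ[𝕜] V)) = 0 ↔ S.charpoly.IsRoot z) := by
    intro z
    rw [Polynomial.eval₂_eq_eval_map, hcp]
    rfl
  -- the bridge map
  set j : V → (Fin d → ℂ) := fun v k => f (b.repr v k) with hj
  have hj0 : ∀ v : V, j v = 0 → v = 0 := by
    intro v hv
    have hk : ∀ k, b.repr v k = 0 := by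
      intro k
      apply f.injective
      rw [map_zero]
      exact congrFun hv k
    exact b.repr.map_eq_zero_iff.mp (Finsupp.ext hk)
  have hjT : ∀ v : V, j (T v) = S (j v) := by
    intro v
    funext k
    show f (b.repr (T v) k) = (Matrix.toLin' A) (j v) k
    rw [Matrix.toLin'_apply]
    have hrep : b.repr ((T : V →ₗ[𝕜] V) v) = M.mulVec (b.repr v) := by
      rw [hM, LinearMap.toMatrix_mulVec_repr]
    rw [show b.repr (T v) = b.repr ((T : V →ₗ[𝕜] V) v) from rfl, hrep]
    simp only [Matrix.mulVec, dotProduct, map_sum, map_mul, hA, Matrix.map_apply, hj]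
  have hjTn : ∀ (n : ℕ) (v : V), j ((T ^ n) v) = (S ^ n) (j v) := by
    intro n
    induction n with
    | zero => intro v; simp
    | succ n ih =>
      intro v
      rw [pow_succ, pow_succ, ContinuousLinearMap.mul_apply, Module.End.mul_apply, ih (T v),
        hjT v]
  -- norm comparisons
  set eL : V ≃L[𝕜] (Fin d → 𝕜) := b.equivFun.toContinuousLinearEquiv with heL
  have hjnorm : ∀ v : V, ‖j v‖ = ‖eL v‖ := by
    intro v
    rw [Pi.norm_def, Pi.norm_def]
    congr 1
    apply Finset.sup_congr rfl
    intro k _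
    have : ‖j v k‖ = ‖(eL v) k‖ := by
      rw [hj]
      show ‖f (b.repr v k)‖ = ‖(eL v) k‖
      rw [aux_f_abs f hf]
      congr 1
    exact NNReal.eq this
  have hub : ∀ v : V, ‖j v‖ ≤ ‖(eL : V →L[𝕜] (Fin d → 𝕜))‖ * ‖v‖ := by
    intro v
    rw [hjnorm v]
    exact (eL : V →L[𝕜] (Fin d → 𝕜)).le_opNorm v
  have hlb : ∀ v : V, ‖v‖ ≤ ‖(eL.symm : (Fin d → 𝕜) →L[𝕜] V)‖ * ‖j v‖ := by
    intro v
    rw [hjnorm v]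
    conv_lhs => rw [← eL.symm_apply_apply v]
    exact (eL.symm : (Fin d → 𝕜) →L[𝕜] V).le_opNorm (eL v)
  have hjsymm : ∀ x : Fin d → 𝕜, ∀ k, b.repr (b.equivFun.symm x) k = x k := by
    intro x k
    have : b.equivFun (b.equivFun.symm x) = x := b.equivFun.apply_symm_apply x
    rw [← congrFun this k, Module.Basis.equivFun_apply]
  constructor
  · -- expansive ⇒ eigenvalues outside closed unit disk
    rintro ⟨U, hU, hexp⟩ z hz
    by_contra hzle
    push_neg at hzle
    rw [hroot_iff z] at hz
    obtain ⟨w, hw0, hSw⟩ := aux_exists_eigvec S hz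
    have hSnw : ∀ n : ℕ, (S ^ n) w = z ^ n • w :=
      Module.End.HasEigenvector.pow_apply ⟨Module.End.mem_eigenspace_iff.mpr hSw, hw0⟩
    have hwbd : ∀ n : ℕ, ‖(S ^ n) w‖ ≤ ‖w‖ := by
      intro n
      rw [hSnw n, norm_smul, norm_pow]
      calc ‖z‖ ^ n * ‖w‖ ≤ 1 * ‖w‖ := by
            apply mul_le_mul_of_nonneg_right _ (norm_nonneg w)
            exact pow_le_one₀ (norm_nonneg z) hzle
        _ = ‖w‖ := one_mul _
    -- produce a nonzero vector of V with bounded orbit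
    have hkey : ∃ v : V, v ≠ 0 ∧ ∃ Cb : ℝ, ∀ n : ℕ, ‖(T ^ n) v‖ ≤ Cb := by
      have mk : ∀ (u0 : Fin d → ℂ) (x : Fin d → 𝕜), (∀ k, f (x k) = u0 k) → u0 ≠ 0 →
          (∀ n : ℕ, ‖(S ^ n) u0‖ ≤ ‖w‖) →
          ∃ v : V, v ≠ 0 ∧ ∃ Cb : ℝ, ∀ n : ℕ, ‖(T ^ n) v‖ ≤ Cb := by
        intro u0 x hx hu0 hbd
        set v : V := b.equivFun.symm x with hv
        have hjv : j v = u0 := by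
          funext k
          rw [hj]
          show f (b.repr v k) = u0 k
          rw [hv, hjsymm]
          exact hx k
        refine ⟨v, fun h => hu0 (by rw [← hjv, h]; funext k; simp [hj]),
          ‖(eL.symm : (Fin d → 𝕜) →L[𝕜] V)‖ * ‖w‖, fun n => ?_⟩
        calc ‖(T ^ n) v‖ ≤ ‖(eL.symm : (Fin d → 𝕜) →L[𝕜] V)‖ * ‖j ((T ^ n) v)‖ := hlb _
          _ = ‖(eL.symm : (Fin d → 𝕜) →L[𝕜] V)‖ * ‖(S ^ n) u0‖ := by rw [hjTn n v, hjv]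
          _ ≤ ‖(eL.symm : (Fin d → 𝕜) →L[𝕜] V)‖ * ‖w‖ :=
              mul_le_mul_of_nonneg_left (hbd n) (norm_nonneg _)
      rcases RCLike.I_mul_I_ax (K := 𝕜) with hI | hI
      · -- real case : take the real or imaginary part of w
        have hAreal : ∀ k l, (starRingEnd ℂ) (A k l) = A k l := by
          intro k l
          have hMc : M k l = ((RCLike.re (M k l) : ℝ) : 𝕜) := by
            conv_lhs => rw [← RCLike.re_add_im (M k l)]
            rw [hI, mul_zero, add_zero]
          have hAc : A k l = (((RCLike.re (M k l) : ℝ)) : ℂ) := by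
            rw [hA, Matrix.map_apply]
            conv_lhs => rw [hMc]
            exact aux_f_ofReal f hf _
          rw [hAc]
          exact Complex.conj_ofReal _
        set st : (Fin d → ℂ) → (Fin d → ℂ) := fun u k => (starRingEnd ℂ) (u k) with hst
        have hstS : ∀ u, S (st u) = st (S u) := by
          intro u
          funext k
          rw [hS]
          show (A.mulVec (st u)) k = (starRingEnd ℂ) ((A.mulVec u) k)
          simp only [Matrix.mulVec, dotProduct, map_sum, map_mul, hst]
          exact Finset.sum_congr rfl fun l _ => by rw [hAreal k l]
        have hstSn : ∀ (n : ℕ) u, (S ^ n) (st u) = st ((S ^ n) u) := by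
          intro n
          induction n with
          | zero => intro u; simp
          | succ n ih =>
            intro u
            simp only [pow_succ, Module.End.mul_apply]
            rw [hstS, ih]
        have hstnorm : ∀ u, ‖st u‖ = ‖u‖ := by
          intro u
          rw [Pi.norm_def, Pi.norm_def]
          congr 1
          apply Finset.sup_congr rfl
          intro k _
          simp [hst]
        set wre : Fin d → ℂ := fun k => (((w k).re : ℝ) : ℂ) with hwredef
        set wim : Fin d → ℂ := fun k => (((w k).im : ℝ) : ℂ) with hwimdef
        have hwre : wre = (2⁻¹ : ℂ) • (w + st w) := by
          funext k
          simp only [hwredef, hst, Pi.smul_apply, Pi.add_apply, smul_eq_mul]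
          linear_combination (norm := (push_cast; ring1)) (-(2⁻¹ : ℂ)) * Complex.add_conj (w k)
        have hwim : wim = (-(Complex.I) / 2) • (w - st w) := by
          funext k
          simp only [hwimdef, hst, Pi.smul_apply, Pi.sub_apply, smul_eq_mul]
          linear_combination (norm := (push_cast; ring1)) (Complex.I/2) * Complex.sub_conj (w k) +
            (w k).im * Complex.I_mul_I
        have hwrebd : ∀ n : ℕ, ‖(S ^ n) wre‖ ≤ ‖w‖ := by
          intro n
          rw [hwre, map_smul, map_add, hstSn, norm_smul]
          have h3 : ‖(S ^ n) w + st ((S ^ n) w)‖ ≤ ‖(S ^ n) w‖ + ‖st ((S ^ n) w)‖ :=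
            norm_add_le _ _
          rw [hstnorm] at h3
          have h2 := hwbd n
          have hn2 : ‖(2⁻¹ : ℂ)‖ = 2⁻¹ := by norm_num
          rw [hn2]
          nlinarith [norm_nonneg ((S ^ n) w)]
        have hwimbd : ∀ n : ℕ, ‖(S ^ n) wim‖ ≤ ‖w‖ := by
          intro n
          rw [hwim, map_smul, map_sub, hstSn, norm_smul]
          have h3 : ‖(S ^ n) w - st ((S ^ n) w)‖ ≤ ‖(S ^ n) w‖ + ‖st ((S ^ n) w)‖ :=
            norm_sub_le _ _
          rw [hstnorm] at h3
          have h2 := hwbd n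
          have hn2 : ‖(-(Complex.I) / 2 : ℂ)‖ = 2⁻¹ := by
            rw [norm_div, norm_neg, Complex.norm_I]
            norm_num
          rw [hn2]
          nlinarith [norm_nonneg ((S ^ n) w)]
        have hnot : wre ≠ 0 ∨ wim ≠ 0 := by
          by_contra hcon
          push_neg at hcon
          obtain ⟨h1, h2⟩ := hcon
          apply hw0
          funext k
          have e1 := congrFun h1 k
          have e2 := congrFun h2 k
          simp only [hwredef, hwimdef, Pi.zero_apply, Complex.ofReal_eq_zero] at e1 e2
          exact Complex.ext e1 e2
        rcases hnot with h | h
        · exact mk wre (fun k => (((w k).re : ℝ) : 𝕜)) (fun k => aux_f_ofReal f hf _) h hwrebd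
        · exact mk wim (fun k => (((w k).im : ℝ) : 𝕜)) (fun k => aux_f_ofReal f hf _) h hwimbd
      · -- complex case : f is surjective
        have hsurj := aux_f_surj f hf hI
        choose g hg using hsurj
        exact mk w (fun k => g (w k)) (fun k => hg (w k)) hw0 hwbd
    obtain ⟨v, hv0, Cb, hb⟩ := hkey
    -- scaling argument contradicting expansiveness
    obtain ⟨ε, hε, hball⟩ := Metric.mem_nhds_iff.mp hU
    have hCb0 : 0 ≤ Cb := le_trans (norm_nonneg _) (by simpa using hb 0)
    have hden : (0:ℝ) < 2 * (Cb + 1) := by linarith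
    have hcpos : 0 < ε / (2 * (Cb + 1)) := div_pos hε hden
    set t : 𝕜 := ((ε / (2 * (Cb + 1)) : ℝ) : 𝕜) with ht
    have ht0 : t ≠ 0 := by
      rw [ht]
      exact_mod_cast RCLike.ofReal_ne_zero.mpr hcpos.ne'
    have horb : ∀ n : ℕ, (T ^ n) (t • v) ∈ U := by
      intro n
      apply hball
      rw [Metric.mem_ball, dist_zero_right, map_smul, norm_smul, ht, RCLike.norm_ofReal,
        abs_of_pos hcpos]
      have := hb n
      have h1 : ε / (2 * (Cb + 1)) * ‖(T ^ n) v‖ ≤ ε / (2 * (Cb + 1)) * Cb :=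
        mul_le_mul_of_nonneg_left this hcpos.le
      have h2 : ε / (2 * (Cb + 1)) * Cb < ε := by
        rw [div_mul_eq_mul_div, div_lt_iff₀ hden]
        nlinarith
      linarith
    exact hv0 ((smul_eq_zero.mp (hexp _ horb)).resolve_left ht0)
  · -- eigenvalues outside closed unit disk ⇒ expansive
    intro hroots
    refine ⟨Metric.ball 0 1, Metric.ball_mem_nhds 0 one_pos, fun v hv => ?_⟩
    have hbd : ∀ n : ℕ, ‖(S ^ n) (j v)‖ ≤ ‖(eL : V →L[𝕜] (Fin d → 𝕜))‖ * 1 := by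
      intro n
      rw [← hjTn n v]
      calc ‖j ((T ^ n) v)‖ ≤ ‖(eL : V →L[𝕜] (Fin d → 𝕜))‖ * ‖(T ^ n) v‖ := hub _
        _ ≤ ‖(eL : V →L[𝕜] (Fin d → 𝕜))‖ * 1 := by
            apply mul_le_mul_of_nonneg_left _ (norm_nonneg _)
            have := hv n
            rw [Metric.mem_ball, dist_zero_right] at this
            exact this.le
    have hjv0 : j v = 0 := by
      apply aux_complex_bounded_zero S _ (j v) _ hbd
      intro z hz
      exact hroots z ((hroot_iff z).mpr hz)
    exact hj0 v hjv0
end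

section
/- Let V be a finite-dimensional real or complex vector space and T an invertible element of End(V). The cyclic group {Tⁿ : n ∈ ℤ} acts expansively on V if and only if no eigenvalue of T (over ℂ) lies on the unit circle. -/
open Polynomial

theorem fix_real {𝕜 : Type*} [RCLike 𝕜] (f : 𝕜 →+* ℂ) (hf : Continuous f) (r : ℝ) :
    f (algebraMap ℝ 𝕜 r) = (r : ℂ) := by
  have h : Set.EqOn (fun r : ℝ => f (algebraMap ℝ 𝕜 r)) (fun r : ℝ => (r : ℂ))
      (Set.range (Rat.cast : ℚ → ℝ)) := by
    rintro - ⟨q, rfl⟩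
    simp only [map_ratCast]
    norm_cast
  have := Continuous.ext_on (Rat.denseRange_cast (𝕜 := ℝ))
    (hf.comp (continuous_algebraMap ℝ 𝕜)) Complex.continuous_ofReal h
  exact congrFun this r

set_option maxHeartbeats 1000000 in
/-- Let `V` be a finite-dimensional real or complex vector space and `T`
an invertible element of `End(V)`.  The cyclic group `{Tⁿ : n ∈ ℤ}` acts expansively on
`V` iff no eigenvalue of `T` over `ℂ` (complex root of the characteristic polynomial,
transported along the continuous ring embedding `𝕜 →+* ℂ`) lies on the unit circle. -/
theorem cyclic_group_expansive_iff_spectrum_off_unit_circle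
    {𝕜 V : Type*} [RCLike 𝕜] [NormedAddCommGroup V] [NormedSpace 𝕜 V]
    [FiniteDimensional 𝕜 V] (T : V ≃L[𝕜] V) (f : 𝕜 →+* ℂ) (hf : Continuous f) :
    (∃ U ∈ nhds (0 : V), ∀ v : V, (∀ n : ℤ, (T ^ n) v ∈ U) → v = 0) ↔
      ∀ z : ℂ, Polynomial.eval₂ f z (LinearMap.charpoly ((T : V →L[𝕜] V) : V →ₗ[𝕜] V)) = 0 →
        ‖z‖ ≠ 1 := by
  letI : NormedSpace ℝ V := NormedSpace.restrictScalars ℝ 𝕜 V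
  have hsmulV : ∀ (r : ℝ) (v : V), r • v = (algebraMap ℝ 𝕜 r) • v := fun r v => rfl
  haveI : IsScalarTower ℝ 𝕜 V := ⟨fun r c v => by
    rw [hsmulV, Algebra.smul_def, mul_smul]⟩
  haveI : FiniteDimensional ℝ V := Module.Finite.trans 𝕜 V
  set Tl : V →ₗ[𝕜] V := ((T : V →L[𝕜] V) : V →ₗ[𝕜] V) with hTl
  set Tl' : V →ₗ[𝕜] V := ((T.symm : V →L[𝕜] V) : V →ₗ[𝕜] V) with hTl'
  set m := Module.finrank 𝕜 V
  set b : Module.Basis (Fin m) 𝕜 V := Module.finBasis 𝕜 V with hb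
  set M : Matrix (Fin m) (Fin m) 𝕜 := LinearMap.toMatrix b b Tl with hM
  set N : Matrix (Fin m) (Fin m) 𝕜 := LinearMap.toMatrix b b Tl' with hN
  have hMN : M * N = 1 := by
    rw [hM, hN, ← LinearMap.toMatrix_comp b b b]
    have : Tl ∘ₗ Tl' = LinearMap.id := by
      ext v; simp [hTl, hTl']
    rw [this, LinearMap.toMatrix_id]
  have hNM : N * M = 1 := by
    rw [hM, hN, ← LinearMap.toMatrix_comp b b b]
    have : Tl' ∘ₗ Tl = LinearMap.id := by
      ext v; simp [hTl, hTl']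
    rw [this, LinearMap.toMatrix_id]
  set M' : Matrix (Fin m) (Fin m) ℂ := M.map f with hM'
  set N' : Matrix (Fin m) (Fin m) ℂ := N.map f with hN'
  have hM'N' : M' * N' = 1 := by
    rw [hM', hN', ← Matrix.map_mul, hMN, Matrix.map_one f (map_zero f) (map_one f)]
  have hN'M' : N' * M' = 1 := by
    rw [hM', hN', ← Matrix.map_mul, hNM, Matrix.map_one f (map_zero f) (map_one f)]
  set W := (Fin m → ℂ)
  set S : Module.End ℂ W := Matrix.toLin' M' with hS
  set R : Module.End ℂ W := Matrix.toLin' N' with hR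
  have hSR : S * R = 1 := by
    rw [hS, hR, Module.End.mul_eq_comp, ← Matrix.toLin'_mul, hM'N', Matrix.toLin'_one,
      Module.End.one_eq_id]
  have hRS : R * S = 1 := by
    rw [hS, hR, Module.End.mul_eq_comp, ← Matrix.toLin'_mul, hN'M', Matrix.toLin'_one,
      Module.End.one_eq_id]
  set Su : (Module.End ℂ W)ˣ := ⟨S, R, hSR, hRS⟩ with hSu
  set ι : V → W := fun v i => f (b.repr v i) with hι
  have hfix : ∀ r : ℝ, f (algebraMap ℝ 𝕜 r) = (r : ℂ) := fix_real f hf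
  -- ι intertwines T with S and T.symm with R
  have hιT : ∀ v : V, ι (T v) = S (ι v) := by
    intro v
    funext i
    have h1 : M.mulVec (b.repr v) = b.repr (Tl v) := LinearMap.toMatrix_mulVec_repr b b Tl v
    have h2 : ι (T v) i = f ((M.mulVec (b.repr v)) i) := by
      rw [h1]; simp [hι, hTl]
    rw [h2, hS, Matrix.toLin'_apply]
    simp [Matrix.mulVec, dotProduct, map_sum, hM', hι]
  have hιT' : ∀ v : V, ι (T.symm v) = R (ι v) := by
    intro v
    funext i
    have h1 : N.mulVec (b.repr v) = b.repr (Tl' v) := LinearMap.toMatrix_mulVec_repr b b Tl' v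
    have h2 : ι (T.symm v) i = f ((N.mulVec (b.repr v)) i) := by
      rw [h1]; simp [hι, hTl']
    rw [h2, hR, Matrix.toLin'_apply]
    simp [Matrix.mulVec, dotProduct, map_sum, hN', hι]
  -- ι as a continuous ℝ-linear map
  have hfsmul : ∀ (r : ℝ) (x : 𝕜), f (r • x) = r • f x := by
    intro r x
    rw [Algebra.smul_def, map_mul, hfix, Algebra.smul_def]
    norm_num
  obtain ⟨ιL, hιL⟩ : ∃ g : V →ₗ[ℝ] W, ∀ v, g v = ι v := by
    refine ⟨⟨⟨ι, ?_⟩, ?_⟩, fun v => rfl⟩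
    · intro u v; funext i; simp only [hι, map_add, Finsupp.add_apply]; rfl
    · intro r v
      funext i
      simp only [hι, RingHom.id_apply, Pi.smul_apply]
      rw [hsmulV, map_smul]
      simp only [Finsupp.smul_apply, smul_eq_mul, map_mul, hfix]
      show _ = r • (f ((b.repr v) i))
      rw [Complex.real_smul]
  -- norm bounds for ι
  obtain ⟨C₁, hC₁0, hC₁⟩ : ∃ C : ℝ, 0 ≤ C ∧ ∀ v : V, ‖ι v‖ ≤ C * ‖v‖ := by
    refine ⟨‖LinearMap.toContinuousLinearMap ιL‖, norm_nonneg _, fun v => ?_⟩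
    have := (LinearMap.toContinuousLinearMap ιL).le_opNorm v
    simpa [hιL v] using this
  have hinj : Function.Injective ι := by
    intro u v huv
    have h2 : ∀ i, b.repr u i = b.repr v i :=
      fun i => f.injective (congrFun huv i)
    exact b.repr.injective (Finsupp.ext h2)
  obtain ⟨K, hK0, hK⟩ : ∃ K : ℝ, 0 < K ∧ ∀ v : V, ‖v‖ ≤ K * ‖ι v‖ := by
    have hker : LinearMap.ker ιL = ⊥ := by
      rw [LinearMap.ker_eq_bot]
      intro u v h
      exact hinj (by rw [← hιL, ← hιL, h])
    obtain ⟨K, hK0, hKa⟩ := ιL.exists_antilipschitzWith hker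
    refine ⟨K, hK0, fun v => ?_⟩
    have h0 : ι 0 = 0 := by
      rw [← hιL, map_zero]
    have := hKa.le_mul_dist v 0
    simpa [dist_eq_norm, hιL, h0] using this
  -- powers
  have hSu1 : ∀ (n : ℤ) (w : W), ((Su ^ (n+1) : (Module.End ℂ W)ˣ) : Module.End ℂ W) w
      = ((Su ^ n : (Module.End ℂ W)ˣ) : Module.End ℂ W) (S w) := by
    intro n w
    rw [zpow_add_one]
    rfl
  have hSu2 : ∀ (n : ℤ) (w : W), ((Su ^ (n-1) : (Module.End ℂ W)ˣ) : Module.End ℂ W) w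
      = ((Su ^ n : (Module.End ℂ W)ˣ) : Module.End ℂ W) (R w) := by
    intro n w
    rw [zpow_sub_one]
    rfl
  have hzpow : ∀ (n : ℤ) (v : V), ι ((T ^ n) v)
      = ((Su ^ n : (Module.End ℂ W)ˣ) : Module.End ℂ W) (ι v) := by
    intro n
    induction n using Int.induction_on with
    | zero =>
      intro v
      show ι ((1 : V ≃L[𝕜] V) v) = ((1 : (Module.End ℂ W)ˣ) : Module.End ℂ W) (ι v)
      rfl
    | succ k ih =>
      intro v
      have h1 : (T ^ ((k : ℤ) + 1)) v = (T ^ (k : ℤ)) (T v) := by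
        rw [zpow_add_one]; rfl
      rw [h1, ih (T v), hιT v, ← hSu1]
    | pred k ih =>
      intro v
      have h1 : (T ^ (-(k : ℤ) - 1)) v = (T ^ (-(k : ℤ))) (T.symm v) := by
        rw [zpow_sub_one]; rfl
      rw [h1, ih (T.symm v), hιT' v, ← hSu2]
  -- characteristic polynomial of S
  have hchar : LinearMap.charpoly S = (LinearMap.charpoly Tl).map f := by
    have h1 : LinearMap.toMatrix (Pi.basisFun ℂ (Fin m)) (Pi.basisFun ℂ (Fin m)) S = M' := by
      rw [hS, ← Matrix.toLin_eq_toLin', LinearMap.toMatrix_toLin]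
    have h2 : LinearMap.charpoly S = M'.charpoly := by
      rw [← LinearMap.charpoly_toMatrix S (Pi.basisFun ℂ (Fin m)), h1]
    rw [h2, hM', Matrix.charpoly_map, hM, LinearMap.charpoly_toMatrix]
  -- the submodule of vectors with bounded orbit
  set B : Submodule ℂ W :=
    { carrier := {w | ∃ C : ℝ, ∀ n : ℤ,
        ‖((Su ^ n : (Module.End ℂ W)ˣ) : Module.End ℂ W) w‖ ≤ C},
      add_mem' := by
        rintro w w' ⟨C, hC⟩ ⟨C', hC'⟩
        refine ⟨C + C', fun n => ?_⟩
        rw [map_add]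
        exact (norm_add_le _ _).trans (add_le_add (hC n) (hC' n))
      zero_mem' := ⟨0, fun n => by rw [map_zero, norm_zero]⟩
      smul_mem' := by
        rintro c w ⟨C, hC⟩
        refine ⟨‖c‖ * C, fun n => ?_⟩
        rw [map_smul, norm_smul]
        exact mul_le_mul_of_nonneg_left (hC n) (norm_nonneg c) } with hB
  have hmemB : ∀ w : W, w ∈ B ↔ ∃ C : ℝ, ∀ n : ℤ,
      ‖((Su ^ n : (Module.End ℂ W)ˣ) : Module.End ℂ W) w‖ ≤ C := fun w => Iff.rfl
  have hBS : ∀ w ∈ B, S w ∈ B := by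
    rintro w ⟨C, hC⟩
    refine ⟨C, fun n => ?_⟩
    rw [← hSu1]
    exact hC (n + 1)
  -- orbit of an eigenvector
  have horb : ∀ (μ : ℂ), μ ≠ 0 → ∀ w : W, S w = μ • w → ∀ n : ℤ,
      ((Su ^ n : (Module.End ℂ W)ˣ) : Module.End ℂ W) w = μ ^ n • w := by
    intro μ hμ w hw
    have hRw : R w = μ⁻¹ • w := by
      have h1 : R (S w) = w := by
        have := congrFun (congrArg (fun g : Module.End ℂ W => ⇑g) hRS) w
        simpa [Module.End.mul_apply] using this
      rw [hw, map_smul] at h1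
      rw [eq_inv_smul_iff₀ hμ]
      exact h1
    intro n
    induction n using Int.induction_on with
    | zero => simp
    | succ k ih =>
      rw [hSu1, hw, map_smul, ih, smul_smul, mul_comm, ← zpow_add_one₀ hμ]
    | pred k ih =>
      rw [hSu2, hRw, map_smul, ih, smul_smul, mul_comm, ← zpow_sub_one₀ hμ]
  have hRSw : ∀ w : W, R (S w) = w := by
    intro w
    have := congrFun (congrArg (fun g : Module.End ℂ W => ⇑g) hRS) w
    simpa [Module.End.mul_apply] using this
  -- eigenvalues of vectors with bounded orbits lie on the unit circle
  have habs : ∀ (μ : ℂ) (w : W), S w = μ • w → w ≠ 0 → w ∈ B → ‖μ‖ = 1 := by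
    intro μ w hw hne hB'
    have hμ0 : μ ≠ 0 := by
      intro h
      apply hne
      rw [← hRSw w, hw, h, zero_smul, map_zero]
    obtain ⟨C, hC⟩ := (hmemB w).mp hB'
    have hCn : ∀ n : ℤ, ‖μ‖ ^ n * ‖w‖ ≤ C := by
      intro n
      have := hC n
      rwa [horb μ hμ0 w hw n, norm_smul, norm_zpow] at this
    have hwpos : 0 < ‖w‖ := norm_pos_iff.mpr hne
    have hapos : 0 < ‖μ‖ := norm_pos_iff.mpr hμ0
    have h1 : ‖μ‖ = 1 := by
      by_contra hne1
      rcases lt_or_gt_of_ne hne1 with hlt | hgt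
      · have h1a : 1 < ‖μ‖⁻¹ := (one_lt_inv₀ hapos).mpr hlt
        obtain ⟨n, hn⟩ := pow_unbounded_of_one_lt (C / ‖w‖) h1a
        have := hCn (-(n : ℤ))
        rw [zpow_neg, zpow_natCast, ← inv_pow] at this
        have h2 : ‖μ‖⁻¹ ^ n ≤ C / ‖w‖ := (le_div_iff₀ hwpos).mpr this
        exact absurd h2 (not_le.mpr hn)
      · obtain ⟨n, hn⟩ := pow_unbounded_of_one_lt (C / ‖w‖) hgt
        have := hCn (n : ℤ)
        rw [zpow_natCast] at this
        have h2 : ‖μ‖ ^ n ≤ C / ‖w‖ := (le_div_iff₀ hwpos).mpr this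
        exact absurd h2 (not_le.mpr hn)
    rw [h1]
  -- eigenvalues are roots of the (transported) characteristic polynomial
  have hroot : ∀ μ : ℂ, (∃ w : W, w ≠ 0 ∧ S w = μ • w) →
      Polynomial.eval₂ f μ (LinearMap.charpoly Tl) = 0 := by
    rintro μ ⟨w, hne, hw⟩
    have hev : Module.End.HasEigenvalue S μ :=
      Module.End.hasEigenvalue_of_hasEigenvector
        ⟨(Module.End.mem_eigenspace_iff).mpr hw, hne⟩
    have h1 : (minpoly ℂ S).IsRoot μ := (Module.End.hasEigenvalue_iff_isRoot).mp hev
    have h2 : minpoly ℂ S ∣ LinearMap.charpoly S :=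
      minpoly.dvd ℂ S (LinearMap.aeval_self_charpoly S)
    have h3 : (LinearMap.charpoly S).IsRoot μ := h1.dvd h2
    rw [Polynomial.eval₂_eq_eval_map, ← hchar]
    exact h3
  -- roots of the characteristic polynomial admit eigenvectors
  have hvec : ∀ μ : ℂ, Polynomial.eval₂ f μ (LinearMap.charpoly Tl) = 0 →
      ∃ w : W, w ≠ 0 ∧ S w = μ • w := by
    intro μ hμ
    rw [Polynomial.eval₂_eq_eval_map, ← hchar] at hμ
    have hSM : LinearMap.charpoly S = M'.charpoly := by
      rw [← LinearMap.charpoly_toMatrix S (Pi.basisFun ℂ (Fin m))]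
      congr 1
      rw [hS, ← Matrix.toLin_eq_toLin', LinearMap.toMatrix_toLin]
    rw [hSM] at hμ
    have hdet : (μ • (1 : Matrix (Fin m) (Fin m) ℂ) - M').det = 0 := by
      have h1 := RingHom.map_det (Polynomial.evalRingHom μ) (Matrix.charmatrix M')
      have h2 : (Matrix.charmatrix M').map (Polynomial.evalRingHom μ) = μ • 1 - M' := by
        ext i j
        by_cases h : i = j
        · subst h
          simp [Matrix.charmatrix_apply_eq]
        · simp [Matrix.charmatrix_apply_ne _ _ _ h, Matrix.one_apply_ne h, h]
      rw [RingHom.mapMatrix_apply] at h1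
      rw [← h2, ← h1]
      exact hμ
    obtain ⟨w, hw0, hw⟩ := (Matrix.exists_mulVec_eq_zero_iff).mpr hdet
    refine ⟨w, hw0, ?_⟩
    rw [hS, Matrix.toLin'_apply]
    rw [Matrix.sub_mulVec, Matrix.smul_mulVec, Matrix.one_mulVec, sub_eq_zero] at hw
    exact hw.symm
  have hι0 : ι 0 = 0 := by
    funext i
    show f (b.repr 0 i) = (0 : ℂ)
    simp
  constructor
  · -- expansive → no eigenvalue on the unit circle
    intro hL z hz0 hz1
    obtain ⟨w, hw0, hww⟩ := hvec z hz0
    have hz0' : z ≠ 0 := by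
      intro h
      rw [h] at hz1
      simp at hz1
    -- produce a nonzero vector of V with bounded orbit
    have hmain : ∃ v : V, v ≠ 0 ∧ ∃ C₀ : ℝ, ∀ n : ℤ, ‖(T ^ n) v‖ ≤ C₀ := by
      have hfromW : ∀ w' : W, w' ≠ 0 → (∀ i, ∃ x : 𝕜, f x = w' i) →
          (∀ n : ℤ, ‖((Su ^ n : (Module.End ℂ W)ˣ) : Module.End ℂ W) w'‖ ≤ ‖w‖) →
          ∃ v : V, v ≠ 0 ∧ ∃ C₀ : ℝ, ∀ n : ℤ, ‖(T ^ n) v‖ ≤ C₀ := by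
        intro w' hne hpre hCw
        choose x hx using hpre
        set v : V := b.equivFun.symm x with hv
        have hιv : ι v = w' := by
          funext i
          have : b.repr v i = x i := by
            have := b.equivFun.apply_symm_apply x
            rw [hv]
            calc b.repr (b.equivFun.symm x) i = b.equivFun (b.equivFun.symm x) i := rfl
              _ = x i := by rw [this]
          rw [hι]
          simp only [this]
          exact hx i
        refine ⟨v, ?_, K * ‖w‖, fun n => ?_⟩
        · intro h
          rw [h, hι0] at hιv
          exact hne hιv.symm
        · calc ‖(T ^ n) v‖ ≤ K * ‖ι ((T ^ n) v)‖ := hK _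
            _ = K * ‖((Su ^ n : (Module.End ℂ W)ˣ) : Module.End ℂ W) (ι v)‖ := by
                rw [hzpow n v]
            _ ≤ K * ‖w‖ := by
                rw [hιv]
                exact mul_le_mul_of_nonneg_left (hCw n) (le_of_lt hK0)
      have horbw : ∀ n : ℤ, ‖((Su ^ n : (Module.End ℂ W)ˣ) : Module.End ℂ W) w‖ = ‖w‖ := by
        intro n
        rw [horb z hz0' w hww n, norm_smul, norm_zpow, hz1, one_zpow,
          one_mul]
      by_cases hsurj : Function.Surjective ⇑f
      · exact hfromW w hw0 (fun i => hsurj (w i)) (fun n => le_of_eq (horbw n))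
      · -- the range of f consists of reals
        have him : ∀ x : 𝕜, (f x).im = 0 := by
          by_contra hcon
          push_neg at hcon
          obtain ⟨x₀, hx₀⟩ := hcon
          apply hsurj
          intro z'
          refine ⟨algebraMap ℝ 𝕜 (z'.re - z'.im / (f x₀).im * (f x₀).re) +
            algebraMap ℝ 𝕜 (z'.im / (f x₀).im) * x₀, ?_⟩
          rw [map_add, map_mul, hfix, hfix]
          apply Complex.ext
          · simp
          · simp
            field_simp
        -- all matrix entries are real; take real and imaginary parts
        have hM'im : ∀ i j, (M' i j).im = 0 := fun i j => him (M i j)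
        have hN'im : ∀ i j, (N' i j).im = 0 := fun i j => him (N i j)
        have hmul : ∀ (g : ℂ →+ ℝ), (∀ (a : ℝ) (z : ℂ), g ((a : ℂ) * z) = a * g z) →
            ∀ (A : Matrix (Fin m) (Fin m) ℂ), (∀ i j, (A i j).im = 0) → ∀ x : W,
            (fun i => ((g (A.mulVec x i) : ℝ) : ℂ)) =
              A.mulVec (fun i => ((g (x i) : ℝ) : ℂ)) := by
          intro g hg A hA x
          funext i
          have hAij : ∀ j, A i j = (((A i j).re : ℝ) : ℂ) := by
            intro j
            apply Complex.ext
            · rfl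
            · simp [hA i j]
          have h1 : A.mulVec x i = ∑ j, A i j * x j := rfl
          have h2 : ∀ j, g (A i j * x j) = (A i j).re * g (x j) := by
            intro j
            conv_lhs => rw [hAij j]
            exact hg _ _
          rw [h1, map_sum g]
          have h3 : A.mulVec (fun i => ((g (x i) : ℝ) : ℂ)) i
              = ∑ j, A i j * ((g (x j) : ℝ) : ℂ) := rfl
          rw [h3, Complex.ofReal_sum]
          refine Finset.sum_congr rfl fun j _ => ?_
          rw [h2 j, Complex.ofReal_mul]
          conv_rhs => rw [hAij j]
        have hre : ∀ (a : ℝ) (z : ℂ), Complex.reAddGroupHom ((a : ℂ) * z)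
            = a * Complex.reAddGroupHom z := by
          intro a z
          simp [Complex.mul_re]
        have him' : ∀ (a : ℝ) (z : ℂ), Complex.imAddGroupHom ((a : ℂ) * z)
            = a * Complex.imAddGroupHom z := by
          intro a z
          simp [Complex.mul_im]
        -- commutation of entrywise projections with the powers of Su
        have hPcomm : ∀ (P : W → W), (∀ x, P (S x) = S (P x)) → (∀ x, P (R x) = R (P x)) →
            ∀ (n : ℤ) (x : W),
            P (((Su ^ n : (Module.End ℂ W)ˣ) : Module.End ℂ W) x)
              = ((Su ^ n : (Module.End ℂ W)ˣ) : Module.End ℂ W) (P x) := by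
          intro P hPS hPR n
          induction n using Int.induction_on with
          | zero => intro x; rfl
          | succ k ih =>
            intro x
            rw [hSu1 k x, ih (S x), hPS x, ← hSu1 k (P x)]
          | pred k ih =>
            intro x
            rw [hSu2 (-k) x, ih (R x), hPR x, ← hSu2 (-k) (P x)]
        have hcommS : ∀ (g : ℂ →+ ℝ), (∀ (a : ℝ) (z : ℂ), g ((a : ℂ) * z) = a * g z) →
            ∀ (A : Matrix (Fin m) (Fin m) ℂ), (∀ i j, (A i j).im = 0) → ∀ x : W,
            (fun i => ((g ((Matrix.toLin' A x) i) : ℝ) : ℂ))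
              = Matrix.toLin' A (fun i => ((g (x i) : ℝ) : ℂ)) := by
          intro g hg A hA x
          rw [Matrix.toLin'_apply, Matrix.toLin'_apply]
          exact hmul g hg A hA x
        -- the two candidate real vectors
        set wR : W := fun i => (((w i).re : ℝ) : ℂ) with hwR
        set wI : W := fun i => (((w i).im : ℝ) : ℂ) with hwI
        have hPn : ∀ (g : ℂ → ℝ), (∀ z, |g z| ≤ ‖z‖) → ∀ x : W,
            ‖(fun i => ((g (x i) : ℝ) : ℂ) : W)‖ ≤ ‖x‖ := by
          intro g hg x
          rw [pi_norm_le_iff_of_nonneg (norm_nonneg x)]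
          intro i
          calc ‖((g (x i) : ℝ) : ℂ)‖ = |g (x i)| := by
                rw [Complex.norm_real, Real.norm_eq_abs]
            _ ≤ ‖x i‖ := hg (x i)
            _ = ‖x i‖ := rfl
            _ ≤ ‖x‖ := norm_le_pi_norm x i
        have hbound : ∀ (g : ℂ →+ ℝ), (∀ (a : ℝ) (z : ℂ), g ((a : ℂ) * z) = a * g z) →
            (∀ z, |g z| ≤ ‖z‖) →
            ∀ n : ℤ, ‖((Su ^ n : (Module.End ℂ W)ˣ) : Module.End ℂ W)
              (fun i => ((g (w i) : ℝ) : ℂ) : W)‖ ≤ ‖w‖ := by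
          intro g hg hgabs n
          have h1 := hPcomm (fun x => (fun i => ((g (x i) : ℝ) : ℂ) : W))
            (fun x => by rw [hS]; exact hcommS g hg M' hM'im x)
            (fun x => by rw [hR]; exact hcommS g hg N' hN'im x) n w
          rw [← h1]
          calc ‖(fun i => ((g ((((Su ^ n : (Module.End ℂ W)ˣ) : Module.End ℂ W) w) i) : ℝ) : ℂ) : W)‖
              ≤ ‖((Su ^ n : (Module.End ℂ W)ˣ) : Module.End ℂ W) w‖ := hPn g hgabs _
            _ = ‖w‖ := horbw n
        have hcases : wR ≠ 0 ∨ wI ≠ 0 := by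
          by_contra hcon
          push_neg at hcon
          apply hw0
          funext i
          have h1 : ((w i).re : ℂ) = 0 := congrFun hcon.1 i
          have h2 : ((w i).im : ℂ) = 0 := congrFun hcon.2 i
          apply Complex.ext
          · exact (by simpa using h1 : (w i).re = 0)
          · exact (by simpa using h2 : (w i).im = 0)
        rcases hcases with hne | hne
        · refine hfromW wR hne (fun i => ⟨algebraMap ℝ 𝕜 ((w i).re), ?_⟩) ?_
          · rw [hfix]
          · exact hbound Complex.reAddGroupHom hre (fun z => Complex.abs_re_le_norm z)
        · refine hfromW wI hne (fun i => ⟨algebraMap ℝ 𝕜 ((w i).im), ?_⟩) ?_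
          · rw [hfix]
          · exact hbound Complex.imAddGroupHom him' (fun z => Complex.abs_im_le_norm z)
    obtain ⟨v, hv0, C₀, hC₀⟩ := hmain
    obtain ⟨U, hU, hexp⟩ := hL
    obtain ⟨ε, hε, hball⟩ := Metric.mem_nhds_iff.mp hU
    set D : ℝ := max C₀ 1 with hD
    have hD1 : 0 < D := lt_max_of_lt_right one_pos
    set r : ℝ := ε / (2 * D) with hr
    have hrpos : 0 < r := div_pos hε (by positivity)
    set v' : V := algebraMap ℝ 𝕜 r • v with hv'
    have hv'0 : v' ≠ 0 := by
      apply smul_ne_zero _ hv0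
      rw [ne_eq, _root_.map_eq_zero]
      exact ne_of_gt hrpos
    have hv'orb : ∀ n : ℤ, (T ^ n) v' ∈ U := by
      intro n
      apply hball
      rw [Metric.mem_ball, dist_zero_right, hv', map_smul, norm_smul, norm_algebraMap']
      have h1 : ‖r‖ = r := by
        rw [Real.norm_eq_abs, abs_of_pos hrpos]
      rw [h1]
      calc r * ‖(T ^ n) v‖ ≤ r * D :=
            mul_le_mul_of_nonneg_left ((hC₀ n).trans (le_max_left _ _)) (le_of_lt hrpos)
        _ = ε / 2 := by
            rw [hr]
            field_simp
        _ < ε := by linarith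
    exact hv'0 (hexp v' hv'orb)
  · -- no eigenvalue on the unit circle → expansive
    intro hR
    refine ⟨Metric.ball 0 1, Metric.ball_mem_nhds 0 one_pos, fun v hv => ?_⟩
    by_contra hv0
    have hBv : ι v ∈ B := by
      rw [hmemB]
      refine ⟨C₁, fun n => ?_⟩
      rw [← hzpow n v]
      calc ‖ι ((T ^ n) v)‖ ≤ C₁ * ‖(T ^ n) v‖ := hC₁ _
        _ ≤ C₁ * 1 := by
            have hlt : ‖(T ^ n) v‖ < 1 := by
              have := Metric.mem_ball.mp (hv n)
              rwa [dist_zero_right] at this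
            exact mul_le_mul_of_nonneg_left (le_of_lt hlt) hC₁0
        _ = C₁ := mul_one C₁
    have hιv0 : ι v ≠ 0 := by
      intro h
      exact hv0 (hinj (h.trans hι0.symm))
    haveI : Nontrivial B := ⟨⟨⟨ι v, hBv⟩, 0, fun hcon => hιv0 (congrArg Subtype.val hcon)⟩⟩
    obtain ⟨μ, hμ⟩ := Module.End.exists_eigenvalue (LinearMap.restrict S hBS)
    obtain ⟨u, hu⟩ := hμ.exists_hasEigenvector
    have huS : S u.1 = μ • u.1 := by
      have h1 := congrArg Subtype.val hu.apply_eq_smul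
      exact h1
    have hune : u.1 ≠ 0 := fun h => hu.2 (Submodule.coe_eq_zero.mp h)
    exact hR μ (hroot μ ⟨u.1, hune, huS⟩) (habs μ u.1 huS hune u.2)
end

section
/- Let Γ be a semigroup acting on a finite-dimensional real vector space V by linear endomorphisms, and suppose every nonzero vector has unbounded orbit. Then for every finitely generated subsemigroup Λ ⊆ Γ that fails to act expansively, the set S(Λ) = {v : ‖v‖ = 1 and ‖ρ(γ)v‖ ≤ 1 for all γ ∈ Λ} is nonempty; in fact, if some nonzero vector has bounded Λ-orbit, then S(Λ) ≠ ∅. -/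
/-- Fix a norm on a finite-dimensional real vector space `V` and let a
semigroup (with identity) `Γ` act on `V` by linear endomorphisms, every nonzero vector
having unbounded `Γ`-orbit.  For any finitely generated subsemigroup `Λ ⊆ Γ`, if some
nonzero vector has bounded `Λ`-orbit then
`S(Λ) = {v : ‖v‖ = 1 ∧ ∀ γ ∈ Λ, ‖ρ(γ) v‖ ≤ 1}` is nonempty. -/
theorem S_Lambda_nonempty
    {V Γ : Type*} [NormedAddCommGroup V] [NormedSpace ℝ V]
    [FiniteDimensional ℝ V] [Monoid Γ] (ρ : Γ →* (V →L[ℝ] V))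
    (horb : ∀ v : V, v ≠ 0 → ¬ Bornology.IsBounded (Set.range fun γ : Γ => ρ γ v))
    (Λ : Submonoid Γ) (hfg : Λ.FG)
    (hbdd : ∃ v : V, v ≠ 0 ∧ Bornology.IsBounded {w : V | ∃ γ ∈ Λ, w = ρ γ v}) :
    ∃ v : V, ‖v‖ = 1 ∧ ∀ γ ∈ Λ, ‖ρ γ v‖ ≤ 1 := by
  obtain ⟨v, hv0, hb⟩ := hbdd
  set O : Set V := {w : V | ∃ γ ∈ Λ, w = ρ γ v} with hO
  have hvO : v ∈ O := ⟨1, Λ.one_mem, by simp⟩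
  set K : Set V := closure O with hK
  have hKc : IsCompact K := Metric.isCompact_of_isClosed_isBounded isClosed_closure hb.closure
  have hKne : K.Nonempty := ⟨v, subset_closure hvO⟩
  obtain ⟨w, hwK, hmax⟩ := hKc.exists_isMaxOn hKne (continuous_norm.continuousOn)
  have hvw : ‖v‖ ≤ ‖w‖ := hmax (subset_closure hvO)
  have hwpos : 0 < ‖w‖ := lt_of_lt_of_le (norm_pos_iff.mpr hv0) hvw
  -- each ρ γ (γ ∈ Λ) maps K into K
  have hmap : ∀ γ ∈ Λ, ρ γ w ∈ K := by
    intro γ hγ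
    have himg : ρ γ '' O ⊆ O := by
      rintro x ⟨y, ⟨γ', hγ', rfl⟩, rfl⟩
      exact ⟨γ * γ', Λ.mul_mem hγ hγ', by simp [map_mul]⟩
    have : ρ γ w ∈ closure (ρ γ '' O) := by
      have := (ρ γ).continuous.continuousOn.image_closure (s := O)
      exact this ⟨w, hwK, rfl⟩
    exact closure_mono himg this
  refine ⟨‖w‖⁻¹ • w, ?_, ?_⟩
  · rw [norm_smul, norm_inv, norm_norm, inv_mul_cancel₀ hwpos.ne']
  · intro γ hγ
    rw [map_smul, norm_smul, norm_inv, norm_norm]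
    have := hmax (hmap γ hγ)
    calc ‖w‖⁻¹ * ‖ρ γ w‖ ≤ ‖w‖⁻¹ * ‖w‖ := by
          exact mul_le_mul_of_nonneg_left this (by positivity)
      _ = 1 := inv_mul_cancel₀ hwpos.ne'
end

section
/- Let G be a connected Lie group, Γ a semigroup, and ρ an action of Γ on G by continuous (smooth) endomorphisms. Then ρ is expansive if and only if for every nonzero v in the Lie algebra L(G), the orbit {dρ(γ)|_e (v) : γ ∈ Γ} is unbounded in L(G). -/
open Manifold Metric Set Filter Bornology

/-- Mixed second-order bound for a `C²` function of two variables. -/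
lemma exists_mixed_quadratic_bound {E F : Type*} [NormedAddCommGroup E] [NormedSpace ℝ E]
    [NormedAddCommGroup F] [NormedSpace ℝ F]
    (f : E × E → F) (c : E) (hf : ContDiffAt ℝ 2 f (c, c)) :
    ∃ C > (0:ℝ), ∃ δ > (0:ℝ), ∀ a b : E, ‖a - c‖ < δ → ‖b - c‖ < δ →
      ‖f (a, b) - f (a, c) - f (c, b) + f (c, c)‖ ≤ C * (‖a - c‖ * ‖b - c‖) := by
  have h1 : ContDiffAt ℝ 1 (fderiv ℝ f) (c, c) := hf.fderiv_right (by norm_num)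
  obtain ⟨K, t, ht, hK⟩ := h1.exists_lipschitzOnWith
  obtain ⟨u, hu, hfu⟩ := hf.contDiffOn (m := 1) one_le_two (by simp)
  obtain ⟨δ, hδpos, hδ⟩ := Metric.mem_nhds_iff.1 (Filter.inter_mem ht hu)
  refine ⟨K + 1, by positivity, δ / 2, by positivity, ?_⟩
  intro a b ha hb
  have hmem : ∀ x y : E, ‖x - c‖ < δ / 2 → ‖y - c‖ < δ / 2 → (x, y) ∈ ball ((c : E), c) δ := by
    intro x y hx hy
    rw [mem_ball, Prod.dist_eq]
    rw [dist_eq_norm, dist_eq_norm]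
    exact max_lt (by linarith) (by linarith)
  have hdiff : ∀ x y : E, (x, y) ∈ ball ((c : E), c) δ → DifferentiableAt ℝ f (x, y) := by
    intro x y hxy
    have : u ∈ nhds (x, y) := by
      apply Filter.mem_of_superset (isOpen_ball.mem_nhds hxy)
      exact fun z hz => (hδ hz).2
    exact ((hfu.differentiableOn one_ne_zero).differentiableAt this)
  have hcc : ‖(c : E) - c‖ < δ / 2 := by simp [hδpos]
  set g : E → F := fun x => f (x, b) - f (x, c) with hg
  set g' : E → E →L[ℝ] F := fun x =>
    ((fderiv ℝ f (x, b)) - (fderiv ℝ f (x, c))).comp (ContinuousLinearMap.inl ℝ E E) with hg'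
  have hgderiv : ∀ x ∈ ball c (δ / 2), HasFDerivWithinAt g (g' x) (ball c (δ / 2)) x := by
    intro x hx
    have hx' : ‖x - c‖ < δ / 2 := by rwa [mem_ball, dist_eq_norm] at hx
    have h1 : HasFDerivAt (fun y : E => (y, b)) (ContinuousLinearMap.inl ℝ E E) x := by
      exact HasFDerivAt.prodMk (hasFDerivAt_id x) (hasFDerivAt_const b x)
    have h2 : HasFDerivAt (fun y : E => (y, c)) (ContinuousLinearMap.inl ℝ E E) x := by
      exact HasFDerivAt.prodMk (hasFDerivAt_id x) (hasFDerivAt_const c x)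
    have d1 : HasFDerivAt (fun y : E => f (y, b))
        ((fderiv ℝ f (x, b)).comp (ContinuousLinearMap.inl ℝ E E)) x :=
      ((hdiff x b (hmem x b hx' hb)).hasFDerivAt).comp x h1
    have d2 : HasFDerivAt (fun y : E => f (y, c))
        ((fderiv ℝ f (x, c)).comp (ContinuousLinearMap.inl ℝ E E)) x :=
      ((hdiff x c (hmem x c hx' hcc)).hasFDerivAt).comp x h2
    have := (d1.sub d2).hasFDerivWithinAt (s := ball c (δ / 2))
    convert this using 1
    · rfl
    · exact ContinuousLinearMap.sub_comp _ _ _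
  have hbound : ∀ x ∈ ball c (δ / 2), ‖g' x‖ ≤ (K : ℝ) * ‖b - c‖ := by
    intro x hx
    have hx' : ‖x - c‖ < δ / 2 := by rwa [mem_ball, dist_eq_norm] at hx
    apply ContinuousLinearMap.opNorm_le_bound _ (by positivity)
    intro w
    have hLip := hK.dist_le_mul (x, b) (hδ (hmem x b hx' hb)).1 (x, c) (hδ (hmem x c hx' hcc)).1
    have hdist : dist ((x : E), b) ((x : E), c) = ‖b - c‖ := by
      rw [Prod.dist_eq]; simp [dist_eq_norm]
    rw [hdist, dist_eq_norm] at hLip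
    calc ‖g' x w‖ = ‖(fderiv ℝ f (x, b) - fderiv ℝ f (x, c)) (w, 0)‖ := by
          simp [hg', ContinuousLinearMap.comp_apply]
      _ ≤ ‖fderiv ℝ f (x, b) - fderiv ℝ f (x, c)‖ * ‖((w : E), (0 : E))‖ :=
          ContinuousLinearMap.le_opNorm _ _
      _ ≤ ((K : ℝ) * ‖b - c‖) * ‖w‖ := by
          apply mul_le_mul hLip _ (norm_nonneg _) (by positivity)
          rw [Prod.norm_def]; simp
  have hmvt := (convex_ball c (δ / 2)).norm_image_sub_le_of_norm_hasFDerivWithin_le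
    (x := c) (y := a) hgderiv hbound (mem_ball_self (by positivity))
    (by rwa [mem_ball, dist_eq_norm])
  have hre : g a - g c = f (a, b) - f (a, c) - f (c, b) + f (c, c) := by show f (a, b) - f (a, c) - (f (c, b) - f (c, c)) = _; abel
  rw [hre] at hmvt
  calc ‖f (a, b) - f (a, c) - f (c, b) + f (c, c)‖ ≤ (K : ℝ) * ‖b - c‖ * ‖a - c‖ := hmvt
    _ ≤ (K + 1 : ℝ) * (‖a - c‖ * ‖b - c‖) := by
        nlinarith [norm_nonneg (a - c), norm_nonneg (b - c), NNReal.coe_nonneg K]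

set_option maxHeartbeats 4000000 in
/-- **Theorem A.** Let `G` be a connected Lie group (modeled on a
finite-dimensional real vector space `E`, so that `L(G) = T₁G = E`), `Γ` a semigroup
(with identity) and `ρ` an action of `Γ` on `G` by smooth endomorphisms.  Then `ρ` is
expansive iff for every nonzero `v ∈ L(G)` the orbit `{dρ(γ)|₁ v : γ ∈ Γ}` is
unbounded. -/
theorem lie_group_expansive_iff_differential_orbits_unbounded
    {E : Type*} [NormedAddCommGroup E] [NormedSpace ℝ E] [FiniteDimensional ℝ E]
    {G : Type*} [TopologicalSpace G] [ChartedSpace E G] [Group G]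
    [LieGroup 𝓘(ℝ, E) (⊤ : ℕ∞) G] [ConnectedSpace G]
    {Γ : Type*} [Monoid Γ] (ρ : Γ →* Monoid.End G)
    (hsmooth : ∀ γ : Γ, ContMDiff 𝓘(ℝ, E) 𝓘(ℝ, E) (⊤ : ℕ∞) (ρ γ : G → G)) :
    (∃ U ∈ nhds (1 : G), ∀ g : G, (∀ γ : Γ, ρ γ g ∈ U) → g = 1) ↔
      ∀ v : E, v ≠ 0 → ¬ Bornology.IsBounded
        (Set.range fun γ : Γ => (mfderiv 𝓘(ℝ, E) 𝓘(ℝ, E) (ρ γ : G → G) (1 : G) v : E)) := by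
  haveI : IsTopologicalGroup G := topologicalGroup_of_lieGroup 𝓘(ℝ, E) ((⊤ : ℕ∞) : WithTop ℕ∞)
  -- `G` is Hausdorff: being charted, `{1}` is closed.
  haveI hT2 : T2Space G := by
    rw [IsTopologicalGroup.t2Space_iff_one_closed, ← isOpen_compl_iff, isOpen_iff_mem_nhds]
    intro g hg
    simp only [mem_compl_iff, mem_singleton_iff] at hg
    by_cases h1 : (1 : G) ∈ (chartAt E g).source
    · set φ := chartAt E g with hφ
      have hne : φ g ≠ φ 1 := by
        intro h
        exact hg (φ.injOn (mem_chart_source E g) h1 h)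
      have hopen : IsOpen (φ.source ∩ φ ⁻¹' ({φ 1}ᶜ)) :=
        φ.isOpen_inter_preimage (isOpen_compl_singleton)
      apply Filter.mem_of_superset (hopen.mem_nhds ⟨mem_chart_source E g, hne⟩)
      intro x hx
      simp only [mem_compl_iff, mem_singleton_iff]
      intro hx1
      subst hx1
      exact hx.2 rfl
    · apply Filter.mem_of_superset ((chartAt E g).open_source.mem_nhds (mem_chart_source E g))
      intro x hx
      simp only [mem_compl_iff, mem_singleton_iff]
      intro hx1
      subst hx1
      exact h1 hx
  -- notation for the chart at the identity
  set e := extChartAt 𝓘(ℝ, E) (1 : G) with he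
  set c₀ : E := e 1 with hc₀
  have h1S : (1 : G) ∈ e.source := mem_extChartAt_source 1
  have hS_nhds : e.source ∈ nhds (1 : G) := extChartAt_source_mem_nhds 1
  have htarget_nhds : e.target ∈ nhds c₀ := extChartAt_target_mem_nhds 1
  have he_cont : ContinuousAt e 1 := continuousAt_extChartAt 1
  have hsymm_cont : ContinuousAt e.symm c₀ := continuousAt_extChartAt_symm 1
  have hsymm_c₀ : e.symm c₀ = 1 := by rw [hc₀]; exact e.left_inv h1S
  -- the differentials
  set A : Γ → E →L[ℝ] E := fun γ => mfderiv 𝓘(ℝ, E) 𝓘(ℝ, E) (ρ γ : G → G) (1 : G) with hA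
  -- derivative of the chart representation of `ρ γ`
  have hAd : ∀ γ : Γ, HasFDerivAt (fun w => e ((ρ γ) (e.symm w))) (A γ) c₀ := by
    intro γ
    have h := ((hsmooth γ).mdifferentiableAt (by simp)).hasMFDerivAt
      (I := 𝓘(ℝ, E)) (I' := 𝓘(ℝ, E)) (x := (1 : G))
    have h2 : HasFDerivWithinAt (writtenInExtChartAt 𝓘(ℝ, E) 𝓘(ℝ, E) (1 : G) (ρ γ : G → G)) (A γ)
        (Set.range (𝓘(ℝ, E) : E → E)) (e 1) := h.2
    rw [show Set.range (𝓘(ℝ, E) : E → E) = univ from by simp, hasFDerivWithinAt_univ] at h2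
    unfold writtenInExtChartAt at h2
    simp only [map_one] at h2
    exact h2
  -- the shifted chart representation and its derivative at 0
  set f : Γ → E → E := fun γ w => e ((ρ γ) (e.symm (c₀ + w))) - c₀ with hf
  have hf0 : ∀ γ, f γ 0 = 0 := by
    intro γ
    simp only [hf, add_zero, hsymm_c₀, map_one]
    simp [hc₀]
  have hfd : ∀ γ, HasFDerivAt (f γ) (A γ) 0 := by
    intro γ
    have h0 : HasFDerivAt (fun w : E => c₀ + w) (ContinuousLinearMap.id ℝ E) 0 := by
      simpa using (hasFDerivAt_id (0 : E)).const_add c₀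
    have h1 := (show HasFDerivAt (fun w => e ((ρ γ) (e.symm w))) (A γ)
        ((fun w : E => c₀ + w) 0) by simpa using hAd γ).comp 0 h0
    have h2 := h1.sub_const c₀
    simpa [Function.comp, hf] using h2
  -- little-o bounds
  have hlo : ∀ γ : Γ, ∀ ε > (0:ℝ), ∀ᶠ w in nhds (0 : E), ‖f γ w - A γ w‖ ≤ ε * ‖w‖ := by
    intro γ ε hε
    have h := hasFDerivAt_iff_isLittleO_nhds_zero.1 (hfd γ)
    simp only [zero_add, hf0 γ, sub_zero] at h
    exact Asymptotics.isLittleO_iff.1 h hε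
  constructor
  · -- expansive → all orbits unbounded
    rintro ⟨U, hU, hUexp⟩ v hv0 hbdd
    -- radius bound for the orbit of v
    obtain ⟨R₀, hR₀⟩ := hbdd.subset_closedBall 0
    set R : ℝ := max R₀ ‖v‖ with hRdef
    have hvR : ‖v‖ ≤ R := le_max_right _ _
    have hAR : ∀ γ : Γ, ‖A γ v‖ ≤ R := by
      intro γ
      have h1 : A γ v ∈ closedBall (0:E) R₀ := hR₀ ⟨γ, rfl⟩
      rw [mem_closedBall, dist_zero_right] at h1
      exact h1.trans (le_max_left _ _)
    have hRpos : 0 < R := lt_of_lt_of_le (norm_pos_iff.mpr hv0) hvR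
    have hR1pos : (0:ℝ) < R + 1 := by linarith
    -- multiplication read in the chart is C²
    set F : E × E → E := fun p => e (e.symm p.1 * e.symm p.2) with hF
    have hFC2 : ContDiffAt ℝ 2 F (c₀, c₀) := by
      have h := (contMDiff_mul (I := 𝓘(ℝ, E)) (G := G) (n := ((⊤ : ℕ∞) : WithTop ℕ∞))).contMDiffAt (x := ((1:G), (1:G)))
      have h2 := (contMDiffAt_iff.1 (h.of_le (show ((2:ℕ∞) : WithTop ℕ∞) ≤ ((⊤:ℕ∞) : WithTop ℕ∞) from WithTop.coe_le_coe.2 le_top) : ContMDiffAt _ _ 2 _ _)).2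
      simp only [extChartAt_prod, mul_one] at h2
      rw [show Set.range ((𝓘(ℝ, E).prod 𝓘(ℝ, E)) : _ → E × E) = univ from by simp,
        contDiffWithinAt_univ] at h2
      convert h2 using 1
      · rfl
      · rfl
    obtain ⟨C, hCpos, δq, hδqpos, hquad0⟩ := exists_mixed_quadratic_bound F c₀ hFC2
    -- neighbourhoods where products stay in the chart
    have hq : ContinuousAt (fun p : E × E => e.symm p.1 * e.symm p.2) (c₀, c₀) := by
      have h1 : ContinuousAt (fun p : E × E => e.symm p.1) (c₀, c₀) :=
        ContinuousAt.comp (f := Prod.fst) (x := ((c₀ : E), c₀)) hsymm_cont continuousAt_fst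
      have h2 : ContinuousAt (fun p : E × E => e.symm p.2) (c₀, c₀) :=
        ContinuousAt.comp (f := Prod.snd) (x := ((c₀ : E), c₀)) hsymm_cont continuousAt_snd
      exact h1.mul h2
    have hqS : (fun p : E × E => e.symm p.1 * e.symm p.2) ⁻¹' e.source ∈ nhds ((c₀ : E), c₀) := by
      apply hq.preimage_mem_nhds
      have hv1 : e.symm ((c₀ : E), c₀).1 * e.symm ((c₀ : E), c₀).2 = 1 := by
        show e.symm c₀ * e.symm c₀ = 1
        rw [hsymm_c₀, mul_one]
      rw [hv1]
      exact hS_nhds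
    obtain ⟨δp, hδppos, hδp⟩ := Metric.mem_nhds_iff.1 hqS
    obtain ⟨δt, hδtpos, hδt⟩ := Metric.mem_nhds_iff.1 htarget_nhds
    set δ₀ : ℝ := min δq (min δt δp) with hδ₀
    have hδ₀pos : 0 < δ₀ := lt_min hδqpos (lt_min hδtpos hδppos)
    have htball : ∀ a : E, ‖a - c₀‖ < δ₀ → a ∈ e.target := by
      intro a ha
      apply hδt
      rw [mem_ball, dist_eq_norm]
      calc ‖a - c₀‖ < δ₀ := ha
        _ ≤ δt := le_trans (min_le_right _ _) (min_le_left _ _)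
    have hmulS : ∀ a b : E, ‖a - c₀‖ < δ₀ → ‖b - c₀‖ < δ₀ →
        e.symm a * e.symm b ∈ e.source := by
      intro a b ha hb
      have hδ₀p : δ₀ ≤ δp := le_trans (min_le_right _ _) (min_le_right _ _)
      have hmem : ((a : E), b) ∈ ball ((c₀ : E), c₀) δp := by
        rw [mem_ball, Prod.dist_eq, dist_eq_norm, dist_eq_norm]
        exact max_lt (lt_of_lt_of_le ha hδ₀p) (lt_of_lt_of_le hb hδ₀p)
      exact hδp hmem
    have hquad : ∀ a b : E, ‖a - c₀‖ < δ₀ → ‖b - c₀‖ < δ₀ →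
        ‖e (e.symm a * e.symm b) - a - b + c₀‖ ≤ C * (‖a - c₀‖ * ‖b - c₀‖) := by
      intro a b ha hb
      have hδ₀q : δ₀ ≤ δq := min_le_left _ _
      have h := hquad0 a b (lt_of_lt_of_le ha hδ₀q) (lt_of_lt_of_le hb hδ₀q)
      have h1 : F (a, c₀) = a := by
        show e (e.symm a * e.symm c₀) = a
        rw [hsymm_c₀, mul_one, e.right_inv (htball a ha)]
      have h2 : F (c₀, b) = b := by
        show e (e.symm c₀ * e.symm b) = b
        rw [hsymm_c₀, one_mul, e.right_inv (htball b hb)]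
      have h3 : F ((c₀ : E), c₀) = c₀ := by
        show e (e.symm c₀ * e.symm c₀) = c₀
        rw [hsymm_c₀, mul_one]
      rw [h1, h2, h3] at h
      exact h
    -- the power estimate
    set δ₁ : ℝ := min (δ₀ / 4) (1 / (2 * C)) with hδ₁
    have hδ₁pos : 0 < δ₁ := lt_min (by positivity) (by positivity)
    have hδ₁a : δ₁ ≤ δ₀ / 4 := min_le_left _ _
    have hδ₁b : 2 * C * δ₁ ≤ 1 := by
      have h1 : δ₁ ≤ 1 / (2 * C) := min_le_right _ _
      have h2 : (0:ℝ) < 2 * C := by positivity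
      calc 2 * C * δ₁ ≤ 2 * C * (1 / (2 * C)) := by gcongr
        _ = 1 := by field_simp
    have pow_key : ∀ y : G, y ∈ e.source → ∀ n : ℕ, (n : ℝ) * ‖e y - c₀‖ ≤ δ₁ →
        ∀ k : ℕ, k ≤ n → y ^ k ∈ e.source ∧
          ‖e (y ^ k) - c₀ - (k : ℝ) • (e y - c₀)‖ ≤ 2 * C * ((k : ℝ) * ‖e y - c₀‖) ^ 2 := by
      intro y hy n hn k hk
      induction k with
      | zero =>
        refine ⟨by simpa using h1S, ?_⟩
        simp [hc₀.symm]
      | succ k IH =>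
        obtain ⟨hkS, hkE⟩ := IH (Nat.le_of_succ_le hk)
        have hβ0 : (0:ℝ) ≤ ‖e y - c₀‖ := norm_nonneg _
        have hk0 : (0:ℝ) ≤ (k:ℝ) := Nat.cast_nonneg k
        have hkn : ((k:ℝ) + 1) ≤ (n:ℝ) := by exact_mod_cast hk
        have hk1β : ((k:ℝ) + 1) * ‖e y - c₀‖ ≤ δ₁ := by nlinarith
        have hkβ : (k:ℝ) * ‖e y - c₀‖ ≤ δ₁ := by nlinarith
        have hβδ : ‖e y - c₀‖ ≤ δ₁ := by nlinarith
        have hksm : ‖(k:ℝ) • (e y - c₀)‖ = (k:ℝ) * ‖e y - c₀‖ := by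
          rw [norm_smul, Real.norm_eq_abs, abs_of_nonneg hk0]
        have hak : ‖e (y ^ k) - c₀‖ ≤ (k:ℝ) * ‖e y - c₀‖
            + 2 * C * ((k:ℝ) * ‖e y - c₀‖) ^ 2 := by
          calc ‖e (y ^ k) - c₀‖
              = ‖(e (y ^ k) - c₀ - (k:ℝ) • (e y - c₀)) + (k:ℝ) • (e y - c₀)‖ := by
                congr 1; abel
            _ ≤ ‖e (y ^ k) - c₀ - (k:ℝ) • (e y - c₀)‖ + ‖(k:ℝ) • (e y - c₀)‖ :=
                norm_add_le _ _
            _ ≤ 2 * C * ((k:ℝ) * ‖e y - c₀‖) ^ 2 + (k:ℝ) * ‖e y - c₀‖ := by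
                rw [hksm]; exact add_le_add hkE le_rfl
            _ = (k:ℝ) * ‖e y - c₀‖ + 2 * C * ((k:ℝ) * ‖e y - c₀‖) ^ 2 := by ring
        have h2Ckβ : 2 * C * ((k:ℝ) * ‖e y - c₀‖) ≤ 1 := by
          have h9 := mul_le_mul_of_nonneg_left hkβ (by positivity : (0:ℝ) ≤ 2 * C)
          linarith
        have hkβ0 : (0:ℝ) ≤ (k:ℝ) * ‖e y - c₀‖ := mul_nonneg hk0 hβ0
        have h5 : 2 * C * ((k:ℝ) * ‖e y - c₀‖) ^ 2 ≤ (k:ℝ) * ‖e y - c₀‖ := by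
          nlinarith [mul_le_mul_of_nonneg_right h2Ckβ hkβ0]
        have haklt : ‖e (y ^ k) - c₀‖ < δ₀ := by
          have h6 : ‖e (y ^ k) - c₀‖ ≤ 2 * δ₁ := by linarith
          linarith
        have hbyd : ‖e y - c₀‖ < δ₀ := by linarith
        have hion : y ^ (k + 1) ∈ e.source := by
          have h7 := hmulS (e (y ^ k)) (e y) haklt hbyd
          rw [e.left_inv hkS, e.left_inv hy] at h7
          rw [pow_succ]
          exact h7
        refine ⟨hion, ?_⟩
        have hqd := hquad (e (y ^ k)) (e y) haklt hbyd
        rw [e.left_inv hkS, e.left_inv hy] at hqd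
        have hcast : ((k + 1 : ℕ) : ℝ) = (k:ℝ) + 1 := by push_cast; ring
        rw [pow_succ, hcast]
        have hdecomp : e (y ^ k * y) - c₀ - ((k:ℝ) + 1) • (e y - c₀)
            = (e (y ^ k * y) - e (y ^ k) - e y + c₀)
              + (e (y ^ k) - c₀ - (k:ℝ) • (e y - c₀)) := by
          rw [add_smul, one_smul]; abel
        rw [hdecomp]
        calc ‖(e (y ^ k * y) - e (y ^ k) - e y + c₀)
              + (e (y ^ k) - c₀ - (k:ℝ) • (e y - c₀))‖
            ≤ ‖e (y ^ k * y) - e (y ^ k) - e y + c₀‖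
              + ‖e (y ^ k) - c₀ - (k:ℝ) • (e y - c₀)‖ := norm_add_le _ _
          _ ≤ C * (‖e (y ^ k) - c₀‖ * ‖e y - c₀‖)
              + 2 * C * ((k:ℝ) * ‖e y - c₀‖) ^ 2 := add_le_add hqd hkE
          _ ≤ 2 * C * (((k:ℝ) + 1) * ‖e y - c₀‖) ^ 2 := by
              have h5' : ‖e (y ^ k) - c₀‖ ≤ 2 * ((k:ℝ) * ‖e y - c₀‖) := by linarith
              have hb2 : (0:ℝ) ≤ ‖e y - c₀‖ ^ 2 := sq_nonneg _
              have h10 : C * (‖e (y ^ k) - c₀‖ * ‖e y - c₀‖)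
                  ≤ C * ((2 * ((k:ℝ) * ‖e y - c₀‖)) * ‖e y - c₀‖) := by
                apply mul_le_mul_of_nonneg_left _ hCpos.le
                exact mul_le_mul_of_nonneg_right h5' hβ0
              nlinarith [mul_nonneg (mul_nonneg hCpos.le hb2) hk0,
                mul_nonneg hCpos.le hb2]
    -- choice of ε and s
    have hUc : e.symm ⁻¹' U ∈ nhds c₀ := by
      apply hsymm_cont.preimage_mem_nhds
      rw [hsymm_c₀]; exact hU
    obtain ⟨ε, hεpos, hεsub⟩ :=
      Metric.nhds_basis_closedBall.mem_iff.1 (Filter.inter_mem hUc htarget_nhds)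
    set s : ℝ := min (δ₁ / (R + 1))
      (min (ε / ((R + 1) * (1 + 2 * C * δ₁))) (1 / (8 * C * (R + 1)))) with hs
    have h2Cδ₁pos : (0:ℝ) < 1 + 2 * C * δ₁ := by positivity
    have hspos : 0 < s := by
      apply lt_min (by positivity) (lt_min (by positivity) (by positivity))
    set τ : ℝ := s * (R + 1) with hτ
    have hτpos : 0 < τ := by positivity
    have hτδ₁ : τ ≤ δ₁ := by
      have h1 : s ≤ δ₁ / (R + 1) := min_le_left _ _
      rw [hτ]
      calc s * (R + 1) ≤ δ₁ / (R + 1) * (R + 1) := by gcongr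
        _ = δ₁ := div_mul_cancel₀ _ (ne_of_gt hR1pos)
    have hτ8C : τ ≤ 1 / (8 * C) := by
      have h1 : s ≤ 1 / (8 * C * (R + 1)) := le_trans (min_le_right _ _) (min_le_right _ _)
      rw [hτ]
      calc s * (R + 1) ≤ 1 / (8 * C * (R + 1)) * (R + 1) := by gcongr
        _ = 1 / (8 * C) := by field_simp
    have h2Cτ : 2 * C * τ ≤ 1 / 2 := by
      calc 2 * C * τ ≤ 2 * C * (1 / (8 * C)) := by gcongr
        _ = 1 / 4 := by field_simp; ring
        _ ≤ 1 / 2 := by norm_num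
    have hτε : τ + 2 * C * τ ^ 2 ≤ ε := by
      have h1 : s ≤ ε / ((R + 1) * (1 + 2 * C * δ₁)) :=
        le_trans (min_le_right _ _) (min_le_left _ _)
      have h2 : τ ≤ ε / (1 + 2 * C * δ₁) := by
        rw [hτ]
        calc s * (R + 1) ≤ ε / ((R + 1) * (1 + 2 * C * δ₁)) * (R + 1) := by gcongr
          _ = ε / (1 + 2 * C * δ₁) := by field_simp
      have h3 : τ * (1 + 2 * C * δ₁) ≤ ε := by
        rw [le_div_iff₀ h2Cδ₁pos] at h2; linarith
      nlinarith [mul_nonneg (mul_nonneg (by positivity : (0:ℝ) ≤ 2 * C) hτpos.le)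
        (sub_nonneg.2 hτδ₁)]
    have hsvτ : s * ‖v‖ ≤ τ := by
      rw [hτ]
      have h1 : ‖v‖ ≤ R + 1 := by linarith
      have h2 : (0:ℝ) ≤ s := le_of_lt hspos
      exact mul_le_mul_of_nonneg_left h1 h2
    have hsvpos : 0 < s * ‖v‖ := by
      have := norm_pos_iff.mpr hv0; positivity
    -- the sequence of candidate points
    set w : ℕ → E := fun n => (s / (n + 1)) • v with hw
    have hwnorm : ∀ n : ℕ, ‖w n‖ = s / (n + 1) * ‖v‖ := by
      intro n
      show ‖(s / ((n:ℝ) + 1)) • v‖ = _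
      rw [norm_smul, Real.norm_eq_abs, abs_of_pos (by positivity)]
    have hwle : ∀ n : ℕ, ‖w n‖ ≤ s * ‖v‖ := by
      intro n
      rw [hwnorm]
      have h1 : s / (n + 1) ≤ s := by
        apply div_le_self (le_of_lt hspos)
        have : (0:ℝ) ≤ (n:ℝ) := Nat.cast_nonneg n
        linarith
      gcongr
    have hsvδ₁ : s * ‖v‖ ≤ δ₁ := le_trans hsvτ hτδ₁
    have hxt : ∀ n : ℕ, c₀ + w n ∈ e.target := by
      intro n
      apply htball
      rw [add_sub_cancel_left]
      calc ‖w n‖ ≤ s * ‖v‖ := hwle n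
        _ ≤ δ₁ := hsvδ₁
        _ < δ₀ := by linarith [hδ₁a, hδ₀pos]
    set x : ℕ → G := fun n => e.symm (c₀ + w n) with hx
    have hxS : ∀ n, x n ∈ e.source := fun n => e.map_target (hxt n)
    have hex : ∀ n, e (x n) - c₀ = w n := by
      intro n
      show e (e.symm (c₀ + w n)) - c₀ = w n
      rw [e.right_inv (hxt n), add_sub_cancel_left]
    set P : ℕ → G := fun n => x n ^ (n + 1) with hP
    have hn1pos : ∀ n : ℕ, (0:ℝ) < ((n:ℝ) + 1) := by
      intro n; have : (0:ℝ) ≤ (n:ℝ) := Nat.cast_nonneg n; linarith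
    have hsvn : ∀ n : ℕ, (((n + 1 : ℕ)):ℝ) * ‖e (x n) - c₀‖ = s * ‖v‖ := by
      intro n
      rw [hex, hwnorm]
      push_cast
      field_simp
    have hsmulv : ∀ n : ℕ, (((n + 1 : ℕ)):ℝ) • (e (x n) - c₀) = s • v := by
      intro n
      rw [hex]
      show (((n + 1 : ℕ)):ℝ) • ((s / ((n:ℝ) + 1)) • v) = s • v
      rw [smul_smul]
      congr 1
      push_cast
      field_simp
    have hPmem : ∀ n, P n ∈ e.source ∧ ‖e (P n) - c₀ - s • v‖ ≤ 2 * C * (s * ‖v‖) ^ 2 := by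
      intro n
      have h := pow_key (x n) (hxS n) (n + 1) (by rw [hsvn]; exact hsvδ₁) (n + 1) le_rfl
      rw [hsmulv, hsvn] at h
      exact h
    have hsvnorm : ‖s • v‖ = s * ‖v‖ := by
      rw [norm_smul, Real.norm_eq_abs, abs_of_pos hspos]
    have h2Csv : 2 * C * (s * ‖v‖) ≤ 1 / 2 := by
      calc 2 * C * (s * ‖v‖) ≤ 2 * C * τ := by gcongr
        _ ≤ 1 / 2 := h2Cτ
    have hqsv : 2 * C * (s * ‖v‖) ^ 2 ≤ s * ‖v‖ / 2 := by nlinarith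
    have hPup : ∀ n, ‖e (P n) - c₀‖ ≤ 2 * (s * ‖v‖) := by
      intro n
      have h := (hPmem n).2
      calc ‖e (P n) - c₀‖ = ‖(e (P n) - c₀ - s • v) + s • v‖ := by congr 1; abel
        _ ≤ ‖e (P n) - c₀ - s • v‖ + ‖s • v‖ := norm_add_le _ _
        _ ≤ 2 * C * (s * ‖v‖) ^ 2 + s * ‖v‖ := by rw [hsvnorm]; exact add_le_add h le_rfl
        _ ≤ 2 * (s * ‖v‖) := by linarith
    have hPlow : ∀ n, s * ‖v‖ / 2 ≤ ‖e (P n) - c₀‖ := by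
      intro n
      have h := (hPmem n).2
      have h1 : ‖s • v‖ - ‖e (P n) - c₀‖ ≤ ‖e (P n) - c₀ - s • v‖ := by
        have h2 : ‖s • v‖ ≤ ‖e (P n) - c₀ - s • v‖ + ‖e (P n) - c₀‖ := by
          calc ‖s • v‖ = ‖(s • v - (e (P n) - c₀)) + (e (P n) - c₀)‖ := by congr 1; abel
            _ ≤ ‖s • v - (e (P n) - c₀)‖ + ‖e (P n) - c₀‖ := norm_add_le _ _
            _ = ‖e (P n) - c₀ - s • v‖ + ‖e (P n) - c₀‖ := by rw [norm_sub_rev]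
        linarith
      rw [hsvnorm] at h1
      linarith
    -- extract a convergent subsequence of chart values
    have hKsub : closedBall c₀ (2 * (s * ‖v‖)) ⊆ e.target := by
      intro a ha
      apply htball
      rw [mem_closedBall, dist_eq_norm] at ha
      calc ‖a - c₀‖ ≤ 2 * (s * ‖v‖) := ha
        _ ≤ 2 * δ₁ := by linarith
        _ < δ₀ := by linarith [hδ₁a, hδ₀pos]
    have hPK : ∀ n, e (P n) ∈ closedBall c₀ (2 * (s * ‖v‖)) := by
      intro n
      rw [mem_closedBall, dist_eq_norm]
      exact hPup n
    obtain ⟨z, hzK, ns, hns, hzlim⟩ :=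
      (isCompact_closedBall c₀ (2 * (s * ‖v‖))).tendsto_subseq hPK
    have hzt : z ∈ e.target := hKsub hzK
    set gl : G := e.symm z with hgl
    have hglS : gl ∈ e.source := e.map_target hzt
    have hPlim : Filter.Tendsto (fun k => P (ns k)) atTop (nhds gl) := by
      have h2 := (continuousAt_extChartAt_symm'' hzt).tendsto.comp hzlim
      apply h2.congr
      intro k
      exact e.left_inv ((hPmem (ns k)).1)
    have hglne : gl ≠ 1 := by
      intro hgl1
      have hze : z = c₀ := by
        have h1 : e gl = z := e.right_inv hzt
        rw [hgl1] at h1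
        rw [← h1]
      have hlow : s * ‖v‖ / 2 ≤ ‖z - c₀‖ := by
        have htd : Filter.Tendsto (fun k => ‖e (P (ns k)) - c₀‖) atTop (nhds ‖z - c₀‖) :=
          ((hzlim.sub tendsto_const_nhds).norm)
        apply ge_of_tendsto htd
        filter_upwards with k
        exact hPlow (ns k)
      rw [hze] at hlow
      simp only [sub_self, norm_zero] at hlow
      linarith
    -- the orbit of gl stays in U
    apply hglne
    apply hUexp gl
    intro γ
    set V : Set G := e.symm '' closedBall c₀ ε with hV
    have hVU : V ⊆ U := by
      rintro _ ⟨a, ha, rfl⟩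
      exact (hεsub ha).1
    have hVcpt : IsCompact V :=
      (isCompact_closedBall c₀ ε).image_of_continuousOn
        ((continuousOn_extChartAt_symm 1).mono (fun a ha => (hεsub ha).2))
    have hVclosed : IsClosed V := hVcpt.isClosed
    have htd : Filter.Tendsto (fun k => (ρ γ) (P (ns k))) atTop (nhds ((ρ γ) gl)) :=
      (((hsmooth γ).continuous.tendsto gl).comp hPlim)
    have hwlim : Filter.Tendsto w atTop (nhds 0) := by
      have hg0 : Filter.Tendsto (fun n : ℕ => s * ‖v‖ * (1 / (n + 1))) atTop (nhds 0) := by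
        rw [show (0:ℝ) = s * ‖v‖ * 0 from by ring]
        exact tendsto_one_div_add_atTop_nhds_zero_nat.const_mul _
      exact squeeze_zero_norm (fun n => by rw [hwnorm]; apply le_of_eq; ring) hg0
    have hev1 : ∀ᶠ n in atTop, (ρ γ) (x n) ∈ e.source := by
      have hx1 : Filter.Tendsto x atTop (nhds 1) := by
        have h1 : Filter.Tendsto (fun n => c₀ + w n) atTop (nhds c₀) := by
          have h2 := hwlim.const_add c₀
          simpa using h2
        have h2 := hsymm_cont.tendsto.comp h1
        rwa [hsymm_c₀] at h2
      have hpre : (fun g' : G => (ρ γ) g') ⁻¹' e.source ∈ nhds (1 : G) := by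
        apply ((hsmooth γ).continuous.continuousAt).preimage_mem_nhds
        rw [map_one]
        exact hS_nhds
      have h3 := hx1.eventually_mem hpre
      filter_upwards [h3] with n hn
      exact hn
    set ε₁ : ℝ := 1 / (‖v‖ + 1) with hε₁
    have hε₁pos : 0 < ε₁ := by positivity
    have hε₁v : ε₁ * ‖v‖ ≤ 1 := by
      rw [hε₁]
      rw [div_mul_eq_mul_div, div_le_one (by positivity)]
      linarith
    have hev2 : ∀ᶠ n in atTop, ‖f γ (w n) - A γ (w n)‖ ≤ ε₁ * ‖w n‖ :=
      hwlim.eventually (hlo γ ε₁ hε₁pos)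
    have hkey : ∀ᶠ n in atTop, (ρ γ) (P n) ∈ V := by
      filter_upwards [hev1, hev2] with n h1 h2
      have heyn : e ((ρ γ) (x n)) - c₀ = f γ (w n) := rfl
      have hfw : ‖f γ (w n)‖ ≤ ‖A γ (w n)‖ + ε₁ * ‖w n‖ := by
        have h3 : ‖f γ (w n)‖ ≤ ‖A γ (w n)‖ + ‖f γ (w n) - A γ (w n)‖ := by
          calc ‖f γ (w n)‖ = ‖A γ (w n) + (f γ (w n) - A γ (w n))‖ := by congr 1; abel
            _ ≤ ‖A γ (w n)‖ + ‖f γ (w n) - A γ (w n)‖ := norm_add_le _ _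
        linarith
      have hAw : ‖A γ (w n)‖ = s / (n + 1) * ‖A γ v‖ := by
        have h4 : A γ (w n) = (s / ((n:ℝ) + 1)) • A γ v := by
          show A γ ((s / ((n:ℝ) + 1)) • v) = _
          rw [map_smul]
        rw [h4, norm_smul, Real.norm_eq_abs, abs_of_pos (by positivity)]
      have hbnd : (((n + 1 : ℕ)):ℝ) * ‖e ((ρ γ) (x n)) - c₀‖ ≤ τ := by
        rw [heyn]
        have h4 : (((n + 1 : ℕ)):ℝ) * ‖f γ (w n)‖
            ≤ (((n + 1 : ℕ)):ℝ) * (‖A γ (w n)‖ + ε₁ * ‖w n‖) :=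
          mul_le_mul_of_nonneg_left hfw (by positivity)
        have h5 : (((n + 1 : ℕ)):ℝ) * (‖A γ (w n)‖ + ε₁ * ‖w n‖)
            = s * ‖A γ v‖ + ε₁ * (s * ‖v‖) := by
          rw [hAw, hwnorm]
          push_cast
          field_simp
        have h6 : s * ‖A γ v‖ + ε₁ * (s * ‖v‖) ≤ τ := by
          have h7 : s * ‖A γ v‖ ≤ s * R :=
            mul_le_mul_of_nonneg_left (hAR γ) (le_of_lt hspos)
          have h8 : ε₁ * (s * ‖v‖) = s * (ε₁ * ‖v‖) := by ring
          have h9 : ε₁ * (s * ‖v‖) ≤ s * 1 := by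
            rw [h8]
            exact mul_le_mul_of_nonneg_left hε₁v (le_of_lt hspos)
          rw [hτ]
          linarith
        linarith
      have hpk := pow_key ((ρ γ) (x n)) h1 (n + 1) (le_trans hbnd hτδ₁) (n + 1) le_rfl
      obtain ⟨hynS, hynE⟩ := hpk
      have hρP : (ρ γ) (P n) = ((ρ γ) (x n)) ^ (n + 1) := by
        show (ρ γ) (x n ^ (n + 1)) = _
        rw [map_pow]
      rw [hρP]
      have hval : ‖e (((ρ γ) (x n)) ^ (n + 1)) - c₀‖ ≤ ε := by
        have hnsm : ‖(((n + 1 : ℕ)):ℝ) • (e ((ρ γ) (x n)) - c₀)‖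
            = (((n + 1 : ℕ)):ℝ) * ‖e ((ρ γ) (x n)) - c₀‖ := by
          rw [norm_smul, Real.norm_eq_abs, abs_of_pos (by push_cast; exact hn1pos n)]
        have htri : ‖e (((ρ γ) (x n)) ^ (n + 1)) - c₀‖
            ≤ (((n + 1 : ℕ)):ℝ) * ‖e ((ρ γ) (x n)) - c₀‖
              + 2 * C * ((((n + 1 : ℕ)):ℝ) * ‖e ((ρ γ) (x n)) - c₀‖) ^ 2 := by
          calc ‖e (((ρ γ) (x n)) ^ (n + 1)) - c₀‖
              = ‖(e (((ρ γ) (x n)) ^ (n + 1)) - c₀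
                  - (((n + 1 : ℕ)):ℝ) • (e ((ρ γ) (x n)) - c₀))
                + (((n + 1 : ℕ)):ℝ) • (e ((ρ γ) (x n)) - c₀)‖ := by congr 1; abel
            _ ≤ ‖e (((ρ γ) (x n)) ^ (n + 1)) - c₀
                  - (((n + 1 : ℕ)):ℝ) • (e ((ρ γ) (x n)) - c₀)‖
                + ‖(((n + 1 : ℕ)):ℝ) • (e ((ρ γ) (x n)) - c₀)‖ := norm_add_le _ _
            _ ≤ 2 * C * ((((n + 1 : ℕ)):ℝ) * ‖e ((ρ γ) (x n)) - c₀‖) ^ 2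
                + (((n + 1 : ℕ)):ℝ) * ‖e ((ρ γ) (x n)) - c₀‖ := by
                rw [hnsm]; exact add_le_add hynE le_rfl
            _ = (((n + 1 : ℕ)):ℝ) * ‖e ((ρ γ) (x n)) - c₀‖
                + 2 * C * ((((n + 1 : ℕ)):ℝ) * ‖e ((ρ γ) (x n)) - c₀‖) ^ 2 := by ring
        have ht0 : (0:ℝ) ≤ (((n + 1 : ℕ)):ℝ) * ‖e ((ρ γ) (x n)) - c₀‖ := by positivity
        have hmono : (((n + 1 : ℕ)):ℝ) * ‖e ((ρ γ) (x n)) - c₀‖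
            + 2 * C * ((((n + 1 : ℕ)):ℝ) * ‖e ((ρ γ) (x n)) - c₀‖) ^ 2
            ≤ τ + 2 * C * τ ^ 2 := by
          nlinarith [mul_nonneg (mul_nonneg (by positivity : (0:ℝ) ≤ 2 * C)
            (sub_nonneg.2 hbnd)) (add_nonneg ht0 hτpos.le)]
        linarith
      exact ⟨e (((ρ γ) (x n)) ^ (n + 1)),
        by rw [mem_closedBall, dist_eq_norm]; exact hval,
        e.left_inv hynS⟩
    have hevk : ∀ᶠ k in atTop, (ρ γ) (P (ns k)) ∈ V :=
      hns.tendsto_atTop.eventually hkey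
    exact hVU (hVclosed.mem_of_tendsto htd hevk)
  · -- all orbits unbounded → expansive
    intro hub
    by_contra hne
    push_neg at hne
    -- hne : ∀ U ∈ 𝓝 1, ∃ g, (∀ γ, ρ γ g ∈ U) ∧ g ≠ 1
    set r : ℕ → ℝ := fun n => 1 / (n + 1) with hr
    have hrpos : ∀ n, 0 < r n := by
      intro n; rw [hr]; positivity
    have hUn : ∀ n : ℕ, (e.source ∩ e ⁻¹' (ball c₀ (r n))) ∈ nhds (1 : G) := by
      intro n
      exact Filter.inter_mem hS_nhds
        (he_cont.preimage_mem_nhds (by rw [hc₀]; exact ball_mem_nhds _ (hrpos n)))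
    choose g hg hgne using fun n => hne _ (hUn n)
    have hρ1 : ∀ x : G, (ρ 1) x = x := by
      intro x; rw [map_one]; rfl
    have hgS : ∀ n, g n ∈ e.source := by
      intro n; have := (hg n 1); rw [hρ1] at this; exact this.1
    have hgnorm : ∀ n γ, ‖e ((ρ γ) (g n)) - c₀‖ < r n := by
      intro n γ
      have := (hg n γ).2
      rw [mem_preimage, mem_ball, dist_eq_norm] at this
      exact this
    set m : ℕ → ℝ := fun n => ⨆ γ : Γ, ‖e ((ρ γ) (g n)) - c₀‖ with hm
    have hbddA : ∀ n, BddAbove (Set.range fun γ : Γ => ‖e ((ρ γ) (g n)) - c₀‖) := by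
      intro n
      exact ⟨r n, by rintro _ ⟨γ, rfl⟩; exact (hgnorm n γ).le⟩
    have hmub : ∀ n γ, ‖e ((ρ γ) (g n)) - c₀‖ ≤ m n := fun n γ => le_ciSup (hbddA n) γ
    have hmle : ∀ n, m n ≤ r n := fun n => ciSup_le fun γ => (hgnorm n γ).le
    have hmpos : ∀ n, 0 < m n := by
      intro n
      have h1 : 0 < ‖e (g n) - c₀‖ := by
        rw [norm_pos_iff, sub_ne_zero]
        intro hq
        apply hgne n
        have := e.left_inv (hgS n)
        rw [hq] at this
        rw [← this, hsymm_c₀]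
      calc 0 < ‖e (g n) - c₀‖ := h1
        _ = ‖e ((ρ 1) (g n)) - c₀‖ := by rw [hρ1]
        _ ≤ m n := hmub n 1
    choose γs hγs using fun n => exists_lt_of_lt_ciSup (half_lt_self (hmpos n))
    set y : ℕ → E := fun n => e ((ρ (γs n)) (g n)) - c₀ with hy
    have hyub : ∀ n, ‖y n‖ ≤ m n := fun n => hmub n (γs n)
    have hylb : ∀ n, m n / 2 < ‖y n‖ := fun n => hγs n
    have hy0 : ∀ n, 0 < ‖y n‖ := fun n => lt_trans (half_pos (hmpos n)) (hylb n)
    have hyS : ∀ n, (ρ (γs n)) (g n) ∈ e.source := fun n => (hg n (γs n)).1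
    have horb : ∀ n (γ : Γ), ‖e ((ρ γ) ((ρ (γs n)) (g n))) - c₀‖ ≤ m n := by
      intro n γ
      have hcomp : (ρ γ) ((ρ (γs n)) (g n)) = (ρ (γ * γs n)) (g n) := by
        rw [map_mul]; rfl
      rw [hcomp]; exact hmub n _
    set u : ℕ → E := fun n => ‖y n‖⁻¹ • y n with hu
    have husph : ∀ n, u n ∈ sphere (0 : E) 1 := by
      intro n
      rw [mem_sphere_zero_iff_norm, hu]
      rw [norm_smul, norm_inv, norm_norm]
      exact inv_mul_cancel₀ (ne_of_gt (hy0 n))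
    obtain ⟨v, hvsph, ns, hns, hlim⟩ := (isCompact_sphere (0 : E) 1).tendsto_subseq husph
    have hv0 : v ≠ 0 := by
      rw [mem_sphere_zero_iff_norm] at hvsph
      intro h; rw [h, norm_zero] at hvsph; norm_num at hvsph
    apply hub v hv0
    -- show the orbit of v is bounded
    have hyt : Filter.Tendsto y atTop (nhds 0) :=
      squeeze_zero_norm (fun n => (hyub n).trans (hmle n))
        tendsto_one_div_add_atTop_nhds_zero_nat
    have key : ∀ γ : Γ, ‖A γ v‖ ≤ 3 := by
      intro γ
      have htend : Filter.Tendsto (fun k => ‖A γ (u (ns k))‖) atTop (nhds ‖A γ v‖) :=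
        (((A γ).continuous.tendsto v).comp hlim).norm
      apply le_of_tendsto htend
      have hev1 : ∀ᶠ n in atTop, ‖f γ (y n) - A γ (y n)‖ ≤ 1 * ‖y n‖ :=
        hyt.eventually (hlo γ 1 one_pos)
      have hev2 : ∀ᶠ k in atTop, ‖f γ (y (ns k)) - A γ (y (ns k))‖ ≤ 1 * ‖y (ns k)‖ :=
        hns.tendsto_atTop.eventually hev1
      filter_upwards [hev2] with k hk
      set n := ns k
      -- ‖f γ (y n)‖ ≤ 2 * ‖y n‖
      have hfyn : f γ (y n) = e ((ρ γ) ((ρ (γs n)) (g n))) - c₀ := by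
        have h5 : c₀ + y n = e ((ρ (γs n)) (g n)) := by simp [hy]
        simp only [hf]
        rw [h5, e.left_inv (hyS n)]
      have h2 : ‖f γ (y n)‖ ≤ 2 * ‖y n‖ := by
        rw [hfyn]
        calc ‖e ((ρ γ) ((ρ (γs n)) (g n))) - c₀‖ ≤ m n := horb n γ
          _ = 2 * (m n / 2) := by ring
          _ ≤ 2 * ‖y n‖ := by have := hylb n; linarith
      have h3 : ‖A γ (y n)‖ ≤ 3 * ‖y n‖ := by
        have habs : ‖A γ (y n)‖ ≤ ‖f γ (y n)‖ + ‖f γ (y n) - A γ (y n)‖ := by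
          have h6 : A γ (y n) = f γ (y n) - (f γ (y n) - A γ (y n)) := by abel
          nth_rewrite 1 [h6]
          exact norm_sub_le (f γ (y n)) (f γ (y n) - A γ (y n))
        calc ‖A γ (y n)‖ ≤ ‖f γ (y n)‖ + ‖f γ (y n) - A γ (y n)‖ := habs
          _ ≤ 2 * ‖y n‖ + 1 * ‖y n‖ := add_le_add h2 hk
          _ = 3 * ‖y n‖ := by ring
      rw [hu]
      rw [map_smul, norm_smul, norm_inv, norm_norm]
      rw [inv_mul_le_iff₀ (hy0 n)]
      calc ‖A γ (y n)‖ ≤ 3 * ‖y n‖ := h3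
        _ = ‖y n‖ * 3 := by ring
    apply (isBounded_closedBall (x := (0:E)) (r := 3)).subset
    rintro _ ⟨γ, rfl⟩
    show A γ v ∈ closedBall (0:E) 3
    rw [mem_closedBall, dist_zero_right]
    exact key γ
end

section
/- Let Γ be an infinite subsemigroup of the n×n integer matrices M(n,ℤ) acting irreducibly on ℝⁿ (no nontrivial proper Γ-invariant subspace). Then the induced action of Γ on the torus 𝕋ⁿ = ℝⁿ/ℤⁿ is expansive. -/
/-!
The vectors of `ℝⁿ` whose `Γ`-orbit is bounded form a `Γ`-invariant subspace. It is not all of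
`ℝⁿ`, for then the entries of the matrices in `Γ` would be bounded and `Γ` finite; so by
irreducibility every nonzero vector has an unbounded orbit, and compactness of the unit sphere
yields a finite `F ⊆ Γ` such that every `w ≠ 0` is more than doubled in norm by some `A ∈ F`.

Choose `δ` so small that the matrices of `F` map the `δ`-ball into the `½`-ball, on which the
covering map `ℝⁿ → 𝕋ⁿ` preserves norms. If the orbit of `x` stays in the `δ`-ball without being
zero, lift an orbit point `Bx` of more than half the maximal norm to `u` with `‖u‖ = ‖Bx‖`, and
pick `A ∈ F` with `‖Au‖ > 2‖u‖`: the orbit point `ABx` is the image of `Au`, so its norm exceeds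
the maximum.
-/

open scoped Matrix Topology

namespace Representation

section

variable {𝕜 M E : Type*} [NormedField 𝕜] [Monoid M] [SeminormedAddCommGroup E] [NormedSpace 𝕜 E]

def boundedOrbits (ρ : Representation 𝕜 M E) (Γ : Set M) : Submodule 𝕜 E where
  carrier := {w | BddAbove ((fun a => ‖ρ a w‖) '' Γ)}
  zero_mem' := ⟨0, by rintro _ ⟨a, -, rfl⟩; simp⟩
  add_mem' := by
    rintro v w ⟨Cv, hv⟩ ⟨Cw, hw⟩
    refine ⟨Cv + Cw, ?_⟩
    rintro _ ⟨a, ha, rfl⟩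
    calc ‖ρ a (v + w)‖ ≤ ‖ρ a v‖ + ‖ρ a w‖ := by rw [map_add]; exact norm_add_le _ _
      _ ≤ Cv + Cw := add_le_add (hv ⟨a, ha, rfl⟩) (hw ⟨a, ha, rfl⟩)
  smul_mem' := by
    rintro c w ⟨C, hw⟩
    refine ⟨‖c‖ * C, ?_⟩
    rintro _ ⟨a, ha, rfl⟩
    change ‖ρ a (c • w)‖ ≤ _
    rw [map_smul, norm_smul]
    exact mul_le_mul_of_nonneg_left (hw ⟨a, ha, rfl⟩) (norm_nonneg c)

variable {ρ : Representation 𝕜 M E} {Γ : Set M}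

theorem mem_boundedOrbits {w : E} :
    w ∈ ρ.boundedOrbits Γ ↔ BddAbove ((fun a => ‖ρ a w‖) '' Γ) :=
  Iff.rfl

theorem apply_mem_boundedOrbits (hΓ : ∀ a ∈ Γ, ∀ b ∈ Γ, a * b ∈ Γ) {a : M} (ha : a ∈ Γ)
    {w : E} (hw : w ∈ ρ.boundedOrbits Γ) : ρ a w ∈ ρ.boundedOrbits Γ := by
  refine hw.mono ?_
  rintro _ ⟨b, hb, rfl⟩
  exact ⟨b * a, hΓ b hb a ha, by simp⟩

end

section

variable {M E : Type*} [Monoid M] [NormedAddCommGroup E] [NormedSpace ℝ E]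
  [FiniteDimensional ℝ E] {ρ : Representation ℝ M E} {Γ : Set M}

theorem exists_finite_uniformly_expanding (h : ρ.boundedOrbits Γ = ⊥) (c : ℝ) :
    ∃ F ⊆ Γ, F.Finite ∧ ∀ w : E, w ≠ 0 → ∃ a ∈ F, c * ‖w‖ < ‖ρ a w‖ := by
  have hcover : Metric.sphere (0 : E) 1 ⊆ ⋃ a ∈ Γ, {w | c < ‖ρ a w‖} := by
    intro w hw
    have hw0 : w ∉ ρ.boundedOrbits Γ := by
      rw [h, Submodule.mem_bot]
      exact ne_zero_of_mem_unit_sphere ⟨w, hw⟩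
    obtain ⟨_, ⟨a, ha, rfl⟩, hlt⟩ := not_bddAbove_iff.mp hw0 c
    exact Set.mem_biUnion ha hlt
  obtain ⟨F, hFΓ, hF, hFcover⟩ := (isCompact_sphere (0 : E) 1).elim_finite_subcover_image
    (fun a _ => isOpen_lt continuous_const (ρ a).continuous_of_finiteDimensional.norm) hcover
  refine ⟨F, hFΓ, hF, fun w hw => ?_⟩
  have hnorm : 0 < ‖w‖ := norm_pos_iff.mpr hw
  have hunit : ‖w‖⁻¹ • w ∈ Metric.sphere (0 : E) 1 := by
    rw [mem_sphere_zero_iff_norm, norm_smul, norm_inv, norm_norm, inv_mul_cancel₀ hnorm.ne']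
  obtain ⟨a, ha, hlt⟩ := Set.mem_iUnion₂.mp (hFcover hunit)
  refine ⟨a, ha, ?_⟩
  rw [Set.mem_ofPred_eq, map_smul, norm_smul, norm_inv, norm_norm, ← div_eq_inv_mul,
    lt_div_iff₀ hnorm] at hlt
  exact hlt

end

end Representation

section IntMatrixRep

variable (ι : Type*) [Fintype ι] [DecidableEq ι]

def intMatrixRep : Representation ℝ (Matrix ι ι ℤ) (ι → ℝ) where
  toFun A := (A.map (Int.cast : ℤ → ℝ)).mulVecLin
  map_one' := by ext; simp
  map_mul' A B := by
    refine LinearMap.ext fun v => ?_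
    simp only [Matrix.mulVecLin_apply, Module.End.mul_apply, Matrix.mulVec_mulVec]
    exact congrArg (· *ᵥ v) (Matrix.map_mul (f := Int.castRingHom ℝ))

variable {ι}

@[simp]
theorem intMatrixRep_apply (A : Matrix ι ι ℤ) (v : ι → ℝ) :
    intMatrixRep ι A v = A.map (Int.cast : ℤ → ℝ) *ᵥ v :=
  rfl

theorem finite_of_boundedOrbits_eq_top {Γ : Set (Matrix ι ι ℤ)}
    (h : (intMatrixRep ι).boundedOrbits Γ = ⊤) : Γ.Finite := by
  have hcol : ∀ j, ∃ R : ℝ, ∀ A ∈ Γ, ∀ i, |A i j| ≤ ⌈R⌉ := by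
    intro j
    obtain ⟨R, hR⟩ := (Representation.mem_boundedOrbits).mp (h ▸ Submodule.mem_top :
      Pi.single j 1 ∈ (intMatrixRep ι).boundedOrbits Γ)
    refine ⟨R, fun A hA i => ?_⟩
    have hentry : |(A i j : ℝ)| ≤ R := by
      calc |(A i j : ℝ)| = ‖(A.map (Int.cast : ℤ → ℝ) *ᵥ Pi.single j 1) i‖ := by simp
        _ ≤ R := (norm_le_pi_norm _ i).trans (hR ⟨A, hA, rfl⟩)
    exact_mod_cast hentry.trans (Int.le_ceil R)
  choose R hR using hcol
  refine (Set.Finite.pi fun i => Set.Finite.pi fun j =>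
    Set.finite_Icc (-⌈R j⌉) ⌈R j⌉).subset fun A hA => ?_
  simp only [Set.mem_pi, Set.mem_univ, true_implies, Set.mem_Icc]
  exact fun i j => abs_le.mp (hR j A hA i)

end IntMatrixRep

section IntMulVec

variable {l m n G : Type*} [Fintype n] [AddCommGroup G]

def intMulVec (A : Matrix m n ℤ) (x : n → G) : m → G := fun i => ∑ j, A i j • x j

theorem intMulVec_mul [Fintype m] (A : Matrix l m ℤ) (B : Matrix m n ℤ) (x : n → G) :
    intMulVec (A * B) x = intMulVec A (intMulVec B x) := by
  ext i
  simp only [intMulVec, Matrix.mul_apply, Finset.sum_smul, mul_smul, Finset.smul_sum]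
  exact Finset.sum_comm

theorem intMulVec_one [DecidableEq n] (x : n → G) : intMulVec (1 : Matrix n n ℤ) x = x := by
  ext i
  simp [intMulVec, Matrix.one_apply, ite_smul]

theorem intMulVec_comp {R : Type*} [Ring R] (f : R →+ G) (A : Matrix m n ℤ) (v : n → R) :
    intMulVec A (f ∘ v) = f ∘ (A.map (Int.cast : ℤ → R) *ᵥ v) := by
  ext i
  simp [intMulVec, Matrix.mulVec, dotProduct, map_sum, ← zsmul_eq_mul, map_zsmul]

end IntMulVec

namespace AddCircle

variable {p : ℝ} {ι : Type*} [Fintype ι]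

theorem exists_coe_comp_eq_norm_eq (x : ι → AddCircle p) :
    ∃ v : ι → ℝ, (↑) ∘ v = x ∧ ‖v‖ = ‖x‖ := by
  have hlift : ∀ y : AddCircle p, ∃ r : ℝ, (r : AddCircle p) = y ∧ ‖r‖₊ = ‖y‖₊ := by
    intro y
    induction y using QuotientAddGroup.induction_on with
    | H r =>
      refine ⟨r - round (p⁻¹ * r) • p, by simp [coe_period], NNReal.eq ?_⟩
      simp [AddCircle.norm_eq]
  choose v hv hnorm using hlift
  refine ⟨fun i => v (x i), funext fun i => hv (x i), ?_⟩
  simp only [Pi.norm_def, hnorm]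

theorem norm_coe_comp_eq (hp : p ≠ 0) {v : ι → ℝ} (hv : ‖v‖ ≤ |p| / 2) :
    ‖((↑) ∘ v : ι → AddCircle p)‖ = ‖v‖ := by
  have hcoord : ∀ i, ‖((v i : ℝ) : AddCircle p)‖₊ = ‖v i‖₊ := fun i =>
    NNReal.eq <| (norm_coe_eq_abs_iff p hp).mpr ((norm_le_pi_norm v i).trans hv)
  simp only [Pi.norm_def, Function.comp_apply, hcoord]

end AddCircle

theorem exists_pos_forall_intMulVec_eq_zero {ι : Type*} [Fintype ι]
    {Γ F : Set (Matrix ι ι ℤ)} (hF : F.Finite) (hFΓ : ∀ A ∈ F, ∀ B ∈ Γ, A * B ∈ Γ)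
    (hexp : ∀ w : ι → ℝ, w ≠ 0 → ∃ A ∈ F, 2 * ‖w‖ < ‖A.map (Int.cast : ℤ → ℝ) *ᵥ w‖) :
    ∃ δ > 0, ∀ x : ι → AddCircle (1 : ℝ),
      (∀ B ∈ Γ, ‖intMulVec B x‖ < δ) → ∀ B ∈ Γ, intMulVec B x = 0 := by
  obtain ⟨δ, hδ, hsmall⟩ : ∃ δ > 0, ∀ u : ι → ℝ, ‖u‖ < δ →
      ∀ A ∈ F, ‖A.map (Int.cast : ℤ → ℝ) *ᵥ u‖ < 1 / 2 := by
    have hev : ∀ᶠ u in 𝓝 (0 : ι → ℝ), ∀ A ∈ F, ‖A.map (Int.cast : ℤ → ℝ) *ᵥ u‖ < 1 / 2 :=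
      (Filter.eventually_all_finite hF).2 fun A _ =>
        (continuous_const.matrix_mulVec continuous_id).norm.continuousAt.eventually_lt
          continuousAt_const (by norm_num)
    simpa using Metric.eventually_nhds_iff.mp hev
  refine ⟨δ, hδ, fun x hx => ?_⟩
  by_contra! ⟨B₀, hB₀, hx₀⟩
  set M := sSup ((fun B => ‖intMulVec B x‖) '' Γ)
  have hbdd : BddAbove ((fun B => ‖intMulVec B x‖) '' Γ) := by
    refine ⟨δ, ?_⟩
    rintro _ ⟨B, hB, rfl⟩
    exact (hx B hB).le
  have hM : 0 < M := (norm_pos_iff.mpr hx₀).trans_le (le_csSup hbdd ⟨B₀, hB₀, rfl⟩)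
  obtain ⟨_, ⟨B, hB, rfl⟩, hBM⟩ := 
    exists_lt_of_lt_csSup (Set.Nonempty.image _ ⟨B₀, hB₀⟩) (half_lt_self hM)
  obtain ⟨u, hu, hnorm⟩ := AddCircle.exists_coe_comp_eq_norm_eq (intMulVec B x)
  obtain ⟨A, hA, hAu⟩ := hexp u (norm_pos_iff.mp (by linarith))
  have hAB : ‖intMulVec (A * B) x‖ = ‖A.map (Int.cast : ℤ → ℝ) *ᵥ u‖ := by
    have hcomp := intMulVec_comp (QuotientAddGroup.mk' (AddSubgroup.zmultiples (1 : ℝ))) A u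
    simp only [QuotientAddGroup.coe_mk'] at hcomp
    rw [intMulVec_mul, ← hu, hcomp, AddCircle.norm_coe_comp_eq one_ne_zero]
    simpa using (hsmall u (hnorm ▸ hx B hB) A hA).le
  linarith [le_csSup hbdd ⟨A * B, hFΓ A hA B hB, rfl⟩]

/-- Let `Γ` be an infinite subsemigroup of `M(n, ℤ)` acting irreducibly
on `ℝⁿ`.  Then the induced endomorphism action of `Γ` on the torus `𝕋ⁿ = ℝⁿ/ℤⁿ`
(realized as `Fin n → AddCircle 1`, on which `A ∈ M(n, ℤ)` acts by
`x ↦ (i ↦ ∑ j, A i j • x j)`) is expansive. -/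
theorem torus_action_expansive
    {n : ℕ} (Γ : Set (Matrix (Fin n) (Fin n) ℤ))
    (hmul : ∀ A ∈ Γ, ∀ B ∈ Γ, A * B ∈ Γ) (hinf : Γ.Infinite)
    (hirr : ∀ W : Submodule ℝ (Fin n → ℝ),
      (∀ A ∈ Γ, ∀ v ∈ W, (A.map (Int.cast : ℤ → ℝ)) *ᵥ v ∈ W) → W = ⊥ ∨ W = ⊤) :
    ∃ U ∈ nhds (0 : Fin n → AddCircle (1 : ℝ)), ∀ x : Fin n → AddCircle (1 : ℝ),
      (∀ A ∈ insert (1 : Matrix (Fin n) (Fin n) ℤ) Γ,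
        (fun i => ∑ j, A i j • x j) ∈ U) → x = 0 := by
  have hbot : (intMatrixRep (Fin n)).boundedOrbits Γ = ⊥ := by
    refine (hirr _ fun A hA v hv => ?_).resolve_right fun htop =>
      hinf (finite_of_boundedOrbits_eq_top htop)
    exact Representation.apply_mem_boundedOrbits hmul hA hv
  obtain ⟨F, hFΓ, hF, hexp⟩ := Representation.exists_finite_uniformly_expanding hbot 2
  have hFmul : ∀ A ∈ F, ∀ B ∈ insert 1 Γ, A * B ∈ insert 1 Γ := by
    rintro A hA B (rfl | hB)
    · exact Or.inr (by simpa using hFΓ hA)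
    · exact Or.inr (hmul A (hFΓ hA) B hB)
  obtain ⟨δ, hδ, hδx⟩ := exists_pos_forall_intMulVec_eq_zero hF hFmul (by simpa using hexp)
  refine ⟨Metric.ball 0 δ, Metric.ball_mem_nhds 0 hδ, fun x hx => ?_⟩
  simpa [intMulVec_one] using
    hδx x (fun B hB => mem_ball_zero_iff.mp (hx B hB)) 1 (Set.mem_insert 1 Γ)
end

section
/- Let V be a finite-dimensional complex vector space and ρ a reducible automorphism action of a group Γ₀ on V with generalized weights λ₁, …, λ_k. If for each i the image of |λ_i| : Γ₀ → ℝ_{>0} is not contained in {1}, then there exists γ₀ ∈ Γ₀ such that |λ_i(γ₀)| ≠ 1 for all i = 1, …, k. -/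
/-- Let `ρ` be a reducible automorphism action of a group `Γ₀` on a
finite-dimensional complex vector space `V` with generalized weights `λ₁, …, λ_k`
(encoded as in the definition of reducibility: invariant summands `Wᵢ` with bases `bᵢ`
making `ρ(γ)|_{Wᵢ} − λᵢ(γ)·I` strictly upper triangular).  If for each `i` the image of
`|λᵢ| : Γ₀ → ℝ` is not contained in `{1}`, then some `γ₀ ∈ Γ₀` satisfies
`|λᵢ(γ₀)| ≠ 1` for all `i`. -/
theorem exists_element_all_weights_off_unit_circle
    {V Γ₀ : Type*} [NormedAddCommGroup V] [NormedSpace ℂ V] [FiniteDimensional ℂ V]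
    [Group Γ₀] (ρ : Γ₀ →* (V ≃L[ℂ] V)) (k : ℕ) (W : Fin k → Submodule ℂ V)
    (hW : ∀ i, W i ≠ ⊥) (hdirect : DirectSum.IsInternal W)
    (lam : Fin k → (Γ₀ →* ℂ)) (n : Fin k → ℕ) (b : ∀ i, Module.Basis (Fin (n i)) ℂ (W i))
    (htri : ∀ (i : Fin k) (γ : Γ₀) (l : Fin (n i)),
      ρ γ (b i l : V) - lam i γ • (b i l : V) ∈
        Submodule.span ℂ {v : V | ∃ j : Fin (n i), j < l ∧ v = (b i j : V)})
    (hnontriv : ∀ i, ∃ γ : Γ₀, ‖lam i γ‖ ≠ 1) :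
    ∃ γ₀ : Γ₀, ∀ i, ‖lam i γ₀‖ ≠ 1 := by
  -- lam i γ is never zero
  have hne : ∀ (i : Fin k) (γ : Γ₀), lam i γ ≠ 0 := by
    intro i γ h
    have : lam i γ * lam i γ⁻¹ = 1 := by
      rw [← map_mul, mul_inv_cancel, map_one]
    rw [h, zero_mul] at this
    exact zero_ne_one this
  have hpos : ∀ (i : Fin k) (γ : Γ₀), 0 < ‖lam i γ‖ := fun i γ =>
    norm_pos_iff.mpr (hne i γ)
  set g : Fin k → Γ₀ → ℝ := fun i γ => Real.log (‖lam i γ‖) with hg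
  have hg0 : ∀ i γ, g i γ = 0 ↔ ‖lam i γ‖ = 1 := by
    intro i γ
    constructor
    · intro h
      rcases Real.log_eq_zero.mp h with h | h | h
      · exact absurd h (hpos i γ).ne'
      · exact h
      · nlinarith [hpos i γ]
    · intro h; simp [hg, h]
  have hmul : ∀ i (a c : Γ₀), g i (a * c) = g i a + g i c := by
    intro i a c
    simp only [hg, map_mul, norm_mul]
    exact Real.log_mul (ne_of_gt (hpos i a)) (ne_of_gt (hpos i c))
  have hpow : ∀ i (γ : Γ₀) (M : ℕ), g i (γ ^ M) = M * g i γ := by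
    intro i γ M
    simp only [hg, map_pow, norm_pow, Real.log_pow]
  have key : ∀ m : ℕ, ∀ γ : Γ₀,
      (Finset.univ.filter (fun i => g i γ = 0)).card ≤ m → ∃ γ₀, ∀ i, g i γ₀ ≠ 0 := by
    intro m
    induction m with
    | zero =>
      intro γ h
      refine ⟨γ, fun i hi => ?_⟩
      have : i ∈ Finset.univ.filter (fun i => g i γ = 0) := by
        simp [hi]
      rw [Finset.card_eq_zero.mp (Nat.le_zero.mp h)] at this
      exact absurd this (Finset.notMem_empty i)
    | succ m ih =>
      intro γ h
      by_cases hz : ∃ i, g i γ = 0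
      · obtain ⟨i, hi⟩ := hz
        obtain ⟨γ₁, hγ₁⟩ := hnontriv i
        have hgi1 : g i γ₁ ≠ 0 := fun h' => hγ₁ ((hg0 i γ₁).mp h')
        set M : ℕ := (Finset.univ.sup fun j => ⌈|g j γ₁| / |g j γ|⌉₊) + 1 with hM
        have hgM : ∀ j, g j (γ ^ M * γ₁) = M * g j γ + g j γ₁ := by
          intro j; rw [hmul, hpow]
        have hsub : (Finset.univ.filter (fun j => g j (γ ^ M * γ₁) = 0)) ⊆
            (Finset.univ.filter (fun j => g j γ = 0)) \ {i} := by
          intro j hj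
          rw [Finset.mem_filter] at hj
          have hj0 : M * g j γ + g j γ₁ = 0 := by rw [← hgM]; exact hj.2
          have hjγ : g j γ = 0 := by
            by_contra hne'
            have habs : 0 < |g j γ| := abs_pos.mpr hne'
            have hle : (|g j γ₁| / |g j γ| : ℝ) < M := by
              have h1 : ⌈|g j γ₁| / |g j γ|⌉₊ ≤ (Finset.univ.sup fun j => ⌈|g j γ₁| / |g j γ|⌉₊) :=
                Finset.le_sup (f := fun j => ⌈|g j γ₁| / |g j γ|⌉₊) (Finset.mem_univ j)
              calc (|g j γ₁| / |g j γ| : ℝ) ≤ ⌈|g j γ₁| / |g j γ|⌉₊ := Nat.le_ceil _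
                _ < M := by exact_mod_cast Nat.lt_succ_of_le h1
            have hlt : |g j γ₁| < M * |g j γ| := (div_lt_iff₀ habs).mp hle
            have heq : g j γ₁ = -(M * g j γ) := by linarith
            have : |g j γ₁| = M * |g j γ| := by
              rw [heq, abs_neg, abs_mul, Nat.abs_cast]
            linarith
          have hjγ₁ : g j γ₁ = 0 := by rw [hjγ] at hj0; linarith
          rw [Finset.mem_sdiff, Finset.mem_filter, Finset.mem_singleton]
          exact ⟨⟨Finset.mem_univ j, hjγ⟩, fun hji => hgi1 (hji ▸ hjγ₁)⟩
        apply ih (γ ^ M * γ₁)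
        have hicard : i ∈ Finset.univ.filter (fun j => g j γ = 0) := by simp [hi]
        have := Finset.card_le_card hsub
        rw [Finset.card_sdiff_of_subset (Finset.singleton_subset_iff.mpr hicard)] at this
        simp only [Finset.card_singleton] at this
        omega
      · push_neg at hz
        exact ⟨γ, hz⟩
  obtain ⟨γ₀, hγ₀⟩ := key k 1 (le_trans (Finset.card_filter_le _ _) (by simp))
  exact ⟨γ₀, fun i h => hγ₀ i ((hg0 i γ₀).mpr h)⟩
end

section
/- Let Γ be a semigroup, ρ an endomorphism action of Γ on a solenoid G, and A ⊆ Ĝ a ρ-basis. Then a nonzero bounded ρ_e-orbit exists in L(G) if and only if there exist C > 0 and a nonzero p ∈ L(G) with sup_{χ∈A} |p(χ)| < C. -/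
/-- `L(G)`: homomorphisms from the Pontryagin dual `Ĝ` to `ℝ`, as a submodule of
`Ĝ → ℝ` (pointwise operations; `Ĝ → ℝ` carries the product bornology, which on the
finite-dimensional subspace `L(G)` of a solenoid agrees with norm-boundedness). -/
def LG (G : Type*) [CommGroup G] [TopologicalSpace G] :
    Submodule ℝ (PontryaginDual G → ℝ) where
  carrier := {f | ∀ χ ψ : PontryaginDual G, f (χ * ψ) = f χ + f ψ}
  add_mem' := by
    intro a b ha hb χ ψ
    simp only [Pi.add_apply, ha χ ψ, hb χ ψ]; ring
  zero_mem' := by intro χ ψ; simp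
  smul_mem' := by
    intro c f hf χ ψ
    simp only [Pi.smul_apply, hf χ ψ, smul_eq_mul]; ring

section aux
variable {G : Type*} [CommGroup G] [TopologicalSpace G]

lemma LG.map_one' (p : LG G) : (p : PontryaginDual G → ℝ) 1 = 0 := by
  have := p.2 1 1
  simp only [mul_one] at this
  linarith

lemma LG.map_inv' (p : LG G) (χ : PontryaginDual G) :
    (p : PontryaginDual G → ℝ) χ⁻¹ = -(p : PontryaginDual G → ℝ) χ := by
  have := p.2 χ χ⁻¹
  rw [mul_inv_cancel, LG.map_one'] at this
  linarith

end aux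

/-- Let `ρ` be an endomorphism action of a semigroup (with identity)
`Γ` on a solenoid `G`, and `A ⊆ Ĝ` a `ρ`-basis (a generating set of `Ĝ` of the form
`⋃_γ ρ̂(γ)(F)` with `F` finite, where `ρ̂(γ)(χ) = χ ∘ ρ(γ)`).  Then a nonzero bounded
`ρ_e`-orbit exists in `L(G)` iff there are `C > 0` and a nonzero `p ∈ L(G)` with
`|p(χ)| < C` for all `χ ∈ A`. -/
theorem nonzero_bounded_orbit_iff_bounded_on_basis
    {G : Type*} [CommGroup G] [TopologicalSpace G] [IsTopologicalGroup G]
    [CompactSpace G] [ConnectedSpace G]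
    (hrank : ∃ (n : ℕ) (f : Additive (PontryaginDual G) →+ (Fin n → ℚ)),
      Function.Injective f)
    {Γ : Type*} [Monoid Γ] (ρ : Γ →* Monoid.End G)
    (hcont : ∀ γ : Γ, Continuous (ρ γ : G → G))
    (A : Set (PontryaginDual G)) (hAgen : Subgroup.closure A = ⊤)
    (F : Finset (PontryaginDual G))
    (hAF : A = {ψ : PontryaginDual G | ∃ χ ∈ F, ∃ γ : Γ, ψ = χ.comp ⟨ρ γ, hcont γ⟩}) :
    (∃ p : LG G, p ≠ 0 ∧ Bornology.IsBounded
        (Set.range fun γ : Γ => fun χ : PontryaginDual G =>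
          (p : PontryaginDual G → ℝ) (χ.comp ⟨ρ γ, hcont γ⟩))) ↔
      (∃ C : ℝ, 0 < C ∧ ∃ p : LG G, p ≠ 0 ∧
        ∀ χ ∈ A, |(p : PontryaginDual G → ℝ) χ| < C) := by
  constructor
  · rintro ⟨p, hp, hb⟩
    have hB : ∀ χ : PontryaginDual G, ∃ B : ℝ, ∀ γ : Γ,
        |(p : PontryaginDual G → ℝ) (χ.comp ⟨ρ γ, hcont γ⟩)| ≤ B := by
      intro χ
      have h := hb.image_eval χ
      rw [isBounded_iff_forall_norm_le] at h
      obtain ⟨B, hBle⟩ := h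
      exact ⟨B, fun γ => by
        simpa using hBle _ ⟨_, ⟨γ, rfl⟩, rfl⟩⟩
    choose B hBspec using hB
    refine ⟨1 + ∑ χ₀ ∈ F, |B χ₀|, by positivity, p, hp, ?_⟩
    intro χ hχ
    rw [hAF] at hχ
    obtain ⟨χ₀, hχ₀F, γ, rfl⟩ := hχ
    calc |(p : PontryaginDual G → ℝ) (χ₀.comp ⟨ρ γ, hcont γ⟩)| ≤ B χ₀ := hBspec χ₀ γ
      _ ≤ |B χ₀| := le_abs_self _
      _ ≤ ∑ χ₀ ∈ F, |B χ₀| := Finset.single_le_sum (f := fun x => |B x|) (fun _ _ => abs_nonneg _) hχ₀F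
      _ < 1 + ∑ χ₀ ∈ F, |B χ₀| := by linarith
  · rintro ⟨C, hC, p, hp, hA⟩
    refine ⟨p, hp, ?_⟩
    set H : Subgroup (PontryaginDual G) :=
      { carrier := {χ | ∃ B : ℝ, ∀ γ : Γ,
          |(p : PontryaginDual G → ℝ) (χ.comp ⟨ρ γ, hcont γ⟩)| ≤ B}
        one_mem' := ⟨0, fun γ => by
          show |(p : PontryaginDual G → ℝ) 1| ≤ 0
          rw [LG.map_one']; simp⟩
        mul_mem' := by
          rintro χ ψ ⟨B1, h1⟩ ⟨B2, h2⟩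
          refine ⟨B1 + B2, fun γ => ?_⟩
          show |(p : PontryaginDual G → ℝ)
            (χ.comp ⟨ρ γ, hcont γ⟩ * ψ.comp ⟨ρ γ, hcont γ⟩)| ≤ B1 + B2
          exact (congrArg abs (p.2 _ _)).trans_le ((abs_add_le _ _).trans (add_le_add (h1 γ) (h2 γ)))
        inv_mem' := by
          rintro χ ⟨B1, h1⟩
          refine ⟨B1, fun γ => ?_⟩
          show |(p : PontryaginDual G → ℝ) (χ.comp ⟨ρ γ, hcont γ⟩)⁻¹| ≤ B1
          exact (congrArg abs (LG.map_inv' p _)).trans_le ((abs_neg _).trans_le (h1 γ)) } with hH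
    have hAH : A ⊆ (H : Set (PontryaginDual G)) := by
      intro χ hχ
      rw [hAF] at hχ
      obtain ⟨χ₀, hχ₀F, γ₀, rfl⟩ := hχ
      refine ⟨C, fun γ => ?_⟩
      have hmem : (χ₀.comp ⟨ρ γ₀, hcont γ₀⟩).comp ⟨ρ γ, hcont γ⟩ ∈ A := by
        rw [hAF]
        refine ⟨χ₀, hχ₀F, γ₀ * γ, ContinuousMonoidHom.ext fun x => ?_⟩
        refine congrArg χ₀ ?_
        show (ρ γ₀) ((ρ γ) x) = (ρ (γ₀ * γ)) x
        rw [map_mul ρ γ₀ γ]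
        rfl
      exact (hA _ hmem).le
    have hHtop : ∀ χ : PontryaginDual G, χ ∈ H := by
      intro χ
      have : Subgroup.closure A ≤ H := (Subgroup.closure_le H).2 hAH
      rw [hAgen] at this
      exact this (Subgroup.mem_top χ)
    rw [← Bornology.forall_isBounded_image_eval_iff]
    intro χ
    obtain ⟨B, hBχ⟩ := hHtop χ
    rw [isBounded_iff_forall_norm_le]
    refine ⟨B, ?_⟩
    rintro x ⟨_, ⟨γ, rfl⟩, rfl⟩
    simpa using hBχ γ
end

section
/- Let Γ be a finitely generated semigroup and ρ an endomorphism action of Γ on a solenoid G. Then any ρ-basis A of Ĝ is k-regular for some k > 0: there is an increasing sequence of finite sets A₁ ⊆ A₂ ⊆ ⋯ with ⋃ A_i = A and A_n ⊆ Q_k(A_{n−1}) for all n ≥ 2. -/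
/-- `Q_k(A)` for a subset `A` of an abelian group `H` (written multiplicatively, as for
the dual of a compact abelian group): the set of `h ∈ H` satisfying a relation
`n₀ · h = Σⱼ nⱼ aⱼ` (multiplicatively `h ^ n₀ = Π aⱼ ^ nⱼ`) with `aⱼ ∈ A`, `n₀ ≠ 0` and
`|n₀| + |n₁| + ⋯ + |n_r| ≤ k`. -/
def Qk {H : Type*} [CommGroup H] (k : ℕ) (A : Set H) : Set H :=
  {h | ∃ (r : ℕ) (n₀ : ℤ) (n : Fin r → ℤ) (a : Fin r → H),
    (∀ j, a j ∈ A) ∧ n₀ ≠ 0 ∧ n₀.natAbs + ∑ j, (n j).natAbs ≤ k ∧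
    h ^ n₀ = ∏ j, a j ^ n j}

/-- Products of `m` elements of `insert 1 S`. -/
def shells {Γ : Type*} [Monoid Γ] (S : Set Γ) : ℕ → Set Γ
  | 0 => {1}
  | (m + 1) => Set.image2 (· * ·) (insert 1 S) (shells S m)

lemma shells_finite {Γ : Type*} [Monoid Γ] {S : Set Γ} (hS : S.Finite) :
    ∀ m, (shells S m).Finite
  | 0 => Set.finite_singleton 1
  | (m + 1) => Set.Finite.image2 _ (hS.insert 1) (shells_finite hS m)

lemma shells_mono_succ {Γ : Type*} [Monoid Γ] (S : Set Γ) (m : ℕ) :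
    shells S m ⊆ shells S (m + 1) := fun γ hγ =>
  Set.mem_image2.2 ⟨1, Set.mem_insert _ _, γ, hγ, one_mul γ⟩

lemma shells_mono {Γ : Type*} [Monoid Γ] (S : Set Γ) : Monotone (shells S) :=
  monotone_nat_of_le_succ (shells_mono_succ S)

lemma shells_mul {Γ : Type*} [Monoid Γ] (S : Set Γ) :
    ∀ a b : ℕ, ∀ γ ∈ shells S a, ∀ δ ∈ shells S b, γ * δ ∈ shells S (a + b) := by
  intro a
  induction a with
  | zero =>
    intro b γ hγ δ hδ
    obtain rfl : γ = (1 : Γ) := hγ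
    simpa using hδ
  | succ a ih =>
    intro b γ hγ δ hδ
    obtain ⟨s, hs, γ', hγ', rfl⟩ := Set.mem_image2.1 hγ
    have h1 : s * γ' * δ = s * (γ' * δ) := mul_assoc _ _ _
    have h2 : γ' * δ ∈ shells S (a + b) := ih b γ' hγ' δ hδ
    have h3 : a + 1 + b = (a + b) + 1 := by omega
    rw [h3, h1]
    exact Set.mem_image2.2 ⟨s, hs, γ' * δ, h2, rfl⟩

lemma shells_split {Γ : Type*} [Monoid Γ] (S : Set Γ) :
    ∀ a b : ℕ, ∀ γ ∈ shells S (a + b), ∃ w ∈ shells S a, ∃ δ ∈ shells S b, γ = w * δ := by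
  intro a
  induction a with
  | zero =>
    intro b γ hγ
    exact ⟨1, rfl, γ, by simpa using hγ, (one_mul γ).symm⟩
  | succ a ih =>
    intro b γ hγ
    have h3 : a + 1 + b = (a + b) + 1 := by omega
    rw [h3] at hγ
    obtain ⟨s, hs, γ', hγ', rfl⟩ := Set.mem_image2.1 hγ
    obtain ⟨w, hw, δ, hδ, rfl⟩ := ih b γ' hγ'
    exact ⟨s * w, Set.mem_image2.2 ⟨s, hs, w, hw, rfl⟩, δ, hδ, (mul_assoc _ _ _).symm⟩

lemma shells_exhaust {Γ : Type*} [Monoid Γ] {S : Set Γ} (hS : Submonoid.closure S = ⊤) :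
    ∀ γ : Γ, ∃ m, γ ∈ shells S m := by
  intro γ
  have hγ : γ ∈ Submonoid.closure S := hS ▸ Submonoid.mem_top γ
  induction hγ using Submonoid.closure_induction with
  | mem x hx =>
    exact ⟨1, Set.mem_image2.2 ⟨x, Set.mem_insert_of_mem _ hx, 1, rfl, mul_one x⟩⟩
  | one => exact ⟨0, rfl⟩
  | mul x y hx hy ihx ihy =>
    obtain ⟨a, ha⟩ := ihx
    obtain ⟨b, hb⟩ := ihy
    exact ⟨a + b, shells_mul S a b x ha y hb⟩

lemma exists_int_rel {M : Type*} [AddCommGroup M] [Module ℚ M] {s : Set M} {v : M}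
    (hv : v ∈ Submodule.span ℚ s) :
    ∃ (N r : ℕ) (c : Fin r → ℤ) (g : Fin r → M), 0 < N ∧ (∀ j, g j ∈ s) ∧
      (N : ℤ) • v = ∑ j, c j • g j := by
  obtain ⟨r, q, g, hsum⟩ := Submodule.mem_span_set'.1 hv
  set N : ℕ := ∏ j, (q j).den with hN
  have hNpos : 0 < N := Finset.prod_pos fun j _ => (q j).pos
  refine ⟨N, r, fun j => (q j).num * ((N / (q j).den : ℕ) : ℤ), fun j => (g j : M),
    hNpos, fun j => (g j).2, ?_⟩
  have key : ∀ j : Fin r, (((q j).num * ((N / (q j).den : ℕ) : ℤ) : ℤ) : ℚ) = (N : ℚ) * q j := by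
    intro j
    have hd : (q j).den ∣ N := Finset.dvd_prod_of_mem _ (Finset.mem_univ j)
    have h0 : ((q j).den : ℚ) ≠ 0 := by
      exact_mod_cast (q j).den_nz
    obtain ⟨t, ht⟩ := hd
    have hden : (q j).den ≠ 0 := (q j).den_nz
    have hNd : N / (q j).den = t := by rw [ht]; exact Nat.mul_div_cancel_left _ (Nat.pos_of_ne_zero hden)
    have hnum : ∀ x : ℚ, (x.den : ℚ) * x = (x.num : ℚ) := by
      intro x
      have hd' : (x.den : ℚ) ≠ 0 := by exact_mod_cast x.den_nz
      calc (x.den : ℚ) * x = (x.den : ℚ) * ((x.num : ℚ) / (x.den : ℚ)) := by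
            rw [Rat.num_div_den]
        _ = (x.num : ℚ) := by rw [mul_comm, div_mul_cancel₀ _ hd']
    rw [hNd, ht]
    push_cast
    calc ((q j).num : ℚ) * (t : ℚ) = ((q j).den : ℚ) * q j * t := by rw [hnum]
      _ = ((q j).den : ℚ) * (t : ℚ) * q j := by ring
  calc (N : ℤ) • v = ((N : ℤ) : ℚ) • v := (Int.cast_smul_eq_zsmul ℚ _ _).symm
    _ = (N : ℚ) • v := by push_cast; rfl
    _ = (N : ℚ) • ∑ j, q j • (g j : M) := by rw [hsum]
    _ = ∑ j, ((N : ℚ) * q j) • (g j : M) := by rw [Finset.smul_sum]; simp [smul_smul]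
    _ = ∑ j, ((q j).num * ((N / (q j).den : ℕ) : ℤ)) • (g j : M) := by
        refine Finset.sum_congr rfl fun j _ => ?_
        rw [← key j, Int.cast_smul_eq_zsmul]

/-- Let `Γ` be a finitely generated semigroup (with identity) and `ρ`
an endomorphism action of `Γ` on a solenoid `G` (compact connected abelian, dual
torsion-free of finite rank).  Then any `ρ`-basis `A` of `Ĝ` is `k`-regular for some
`k > 0`: there is an increasing sequence of finite sets `A₁ ⊆ A₂ ⊆ ⋯` with union `A`
and `Aₙ₊₁ ⊆ Q_k(Aₙ)` for all `n`. -/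
theorem rho_basis_k_regular
    {G : Type*} [CommGroup G] [TopologicalSpace G] [IsTopologicalGroup G]
    [CompactSpace G] [ConnectedSpace G]
    (hrank : ∃ (n : ℕ) (f : Additive (PontryaginDual G) →+ (Fin n → ℚ)),
      Function.Injective f)
    {Γ : Type*} [Monoid Γ] (S : Finset Γ) (hS : Submonoid.closure (S : Set Γ) = ⊤)
    (ρ : Γ →* Monoid.End G) (hcont : ∀ γ : Γ, Continuous (ρ γ : G → G))
    (A : Set (PontryaginDual G)) (hAgen : Subgroup.closure A = ⊤)
    (F : Finset (PontryaginDual G))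
    (hAF : A = {ψ : PontryaginDual G | ∃ χ ∈ F, ∃ γ : Γ, ψ = χ.comp ⟨ρ γ, hcont γ⟩}) :
    ∃ k : ℕ, 0 < k ∧ ∃ B : ℕ → Finset (PontryaginDual G),
      (∀ n : ℕ, B n ⊆ B (n + 1)) ∧
      (⋃ n : ℕ, (B n : Set (PontryaginDual G))) = A ∧
      (∀ n : ℕ, (B (n + 1) : Set (PontryaginDual G)) ⊆ Qk k (B n)) := by
  classical
  obtain ⟨d, f, hf⟩ := hrank
  set cm : Γ → ContinuousMonoidHom G G := fun γ => ⟨ρ γ, hcont γ⟩ with hcmdef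
  set E : ℕ → Set (PontryaginDual G) :=
    fun m => {ψ | ∃ χ ∈ F, ∃ γ ∈ shells (S : Set Γ) m, ψ = χ.comp (cm γ)} with hEdef
  have hEfin : ∀ m, (E m).Finite := by
    intro m
    have hsub : E m ⊆ (fun p : PontryaginDual G × Γ => p.1.comp (cm p.2)) ''
        ((F : Set (PontryaginDual G)) ×ˢ shells (S : Set Γ) m) := by
      rintro ψ ⟨χ, hχ, γ, hγ, rfl⟩
      exact ⟨(χ, γ), ⟨hχ, hγ⟩, rfl⟩
    exact ((F.finite_toSet.prod (shells_finite S.finite_toSet m)).image _).subset hsub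
  have hEmono : ∀ {m m' : ℕ}, m ≤ m' → E m ⊆ E m' := by
    rintro m m' hmm' ψ ⟨χ, hχ, γ, hγ, rfl⟩
    exact ⟨χ, hχ, γ, shells_mono (S : Set Γ) hmm' hγ, rfl⟩
  have hEA : ∀ m, E m ⊆ A := by
    rintro m ψ ⟨χ, hχ, γ, hγ, rfl⟩
    rw [hAF]
    exact ⟨χ, hχ, γ, rfl⟩
  have hcomp : ∀ (χ : PontryaginDual G) (w δ : Γ),
      (χ.comp (cm w)).comp (cm δ) = χ.comp (cm (w * δ)) := by
    intro χ w δ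
    refine ContinuousMonoidHom.ext fun x => ?_
    show χ (ρ w (ρ δ x)) = χ (ρ (w * δ) x)
    rw [map_mul]
    rfl
  let compHom : Γ → (PontryaginDual G →* PontryaginDual G) := fun δ =>
    { toFun := fun ψ => ψ.comp (cm δ)
      map_one' := ContinuousMonoidHom.ext fun x => rfl
      map_mul' := fun ψ₁ ψ₂ => ContinuousMonoidHom.ext fun x => rfl }
  let Φ : Γ → (Additive (PontryaginDual G) →+ Additive (PontryaginDual G)) := fun δ =>
    MonoidHom.toAdditive (compHom δ)
  have hΦ : ∀ (δ : Γ) (ψ : PontryaginDual G),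
      Φ δ (Additive.ofMul ψ) = Additive.ofMul (ψ.comp (cm δ)) := fun _ _ => rfl
  set V : ℕ → Submodule ℚ (Fin d → ℚ) :=
    fun m => Submodule.span ℚ (f '' (Additive.ofMul '' E m)) with hVdef
  have hVmono : ∀ m, V m ≤ V (m + 1) := fun m =>
    Submodule.span_mono (Set.image_mono (Set.image_mono (hEmono (Nat.le_succ m))))
  obtain ⟨n₀, hn₀⟩ : ∃ m, V (m + 1) ≤ V m := by
    by_contra hcon
    push_neg at hcon
    have hlt : ∀ m, V m < V (m + 1) := fun m =>
      lt_of_le_of_ne (hVmono m) fun he => hcon m he.ge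
    have hsm : StrictMono fun m => Module.finrank ℚ (V m) :=
      strictMono_nat_of_lt_succ fun m => Submodule.finrank_lt_finrank_of_lt (hlt m)
    have h1 : d + 1 ≤ Module.finrank ℚ (V (d + 1)) := hsm.le_apply
    have h2 : Module.finrank ℚ (V (d + 1)) ≤ d := by
      have h3 := Submodule.finrank_le (V (d + 1))
      rwa [Module.finrank_fin_fun] at h3
    omega
  have hseed : ∀ χ ∈ F, ∀ w ∈ shells (S : Set Γ) (n₀ + 1),
      ∃ (N r : ℕ) (c : Fin r → ℤ) (b : Fin r → PontryaginDual G), 0 < N ∧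
        (∀ j, b j ∈ E n₀) ∧
        (N : ℤ) • Additive.ofMul (χ.comp (cm w)) = ∑ j, c j • Additive.ofMul (b j) := by
    intro χ hχ w hw
    have hmem : f (Additive.ofMul (χ.comp (cm w))) ∈ V n₀ :=
      hn₀ (Submodule.subset_span
        ⟨Additive.ofMul (χ.comp (cm w)), ⟨χ.comp (cm w), ⟨χ, hχ, w, hw, rfl⟩, rfl⟩, rfl⟩)
    obtain ⟨N, r, c, g, hN, hg, hrel⟩ := exists_int_rel hmem
    choose a ha hfa using hg
    choose b hb hba using ha
    refine ⟨N, r, c, b, hN, hb, hf ?_⟩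
    refine (map_zsmul f _ _).trans (Eq.trans ?_ (map_sum f _ _).symm)
    have hterm : ∀ j, f (c j • Additive.ofMul (b j)) = c j • g j := fun j => by
      rw [map_zsmul, hba j, hfa j]
    simp only [hterm]
    exact hrel
  choose Nf rf cf bf hNf hbf hrelf using hseed
  set SFn : Finset Γ := (shells_finite S.finite_toSet (n₀ + 1)).toFinset with hSFn
  let wt : {x // x ∈ F} × {x // x ∈ SFn} → ℕ := fun p =>
    Nf p.1.1 p.1.2 p.2.1 ((Set.Finite.mem_toFinset _).1 p.2.2) +
      ∑ j, (cf p.1.1 p.1.2 p.2.1 ((Set.Finite.mem_toFinset _).1 p.2.2) j).natAbs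
  set K : ℕ := Finset.univ.sup wt with hK
  refine ⟨K + 2, by omega, fun m => (hEfin (n₀ + 1 + m)).toFinset, ?_, ?_, ?_⟩
  · intro m ψ hψ
    rw [Set.Finite.mem_toFinset] at *
    exact hEmono (by omega) hψ
  · ext ψ
    simp only [Set.mem_iUnion, Set.Finite.coe_toFinset]
    constructor
    · rintro ⟨m, hm⟩
      exact hEA _ hm
    · intro hA'
      rw [hAF] at hA'
      obtain ⟨χ, hχ, γ, rfl⟩ := hA'
      obtain ⟨m, hm⟩ := shells_exhaust hS γ
      exact ⟨m, χ, hχ, γ, shells_mono (S : Set Γ) (by omega : m ≤ n₀ + 1 + m) hm, rfl⟩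
  · intro m ψ hψ
    rw [Finset.mem_coe, Set.Finite.mem_toFinset] at hψ
    obtain ⟨χ, hχ, γ, hγ, rfl⟩ := hψ
    obtain ⟨w, hw, δ, hδ, rfl⟩ := shells_split (S : Set Γ) (n₀ + 1) (m + 1) γ hγ
    refine ⟨rf χ hχ w hw, (Nf χ hχ w hw : ℤ), cf χ hχ w hw,
      fun j => (bf χ hχ w hw j).comp (cm δ), ?_, ?_, ?_, ?_⟩
    · intro j
      obtain ⟨χ', hχ', u, hu, hbj⟩ := hbf χ hχ w hw j
      refine (Set.Finite.mem_toFinset _).2 ?_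
      show ContinuousMonoidHom.comp (bf χ hχ w hw j) (cm δ) ∈ E (n₀ + 1 + m)
      rw [hbj, hcomp]
      refine ⟨χ', hχ', u * δ, ?_, rfl⟩
      have h4 := shells_mul (S : Set Γ) n₀ (m + 1) u hu δ hδ
      have h5 : n₀ + (m + 1) = n₀ + 1 + m := by omega
      rwa [h5] at h4
    · exact_mod_cast (hNf χ hχ w hw).ne'
    · have hmemSF : w ∈ SFn := (Set.Finite.mem_toFinset _).2 hw
      have hle : wt (⟨χ, hχ⟩, ⟨w, hmemSF⟩) ≤ K := Finset.le_sup (Finset.mem_univ _)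
      rw [Int.natAbs_natCast]
      exact le_trans hle (Nat.le_add_right _ _)
    · apply Additive.ofMul.injective
      have h2 := congrArg (Φ δ) (hrelf χ hχ w hw)
      replace h2 := ((map_zsmul (Φ δ) _ _).symm.trans h2).trans (map_sum (Φ δ) _ _)
      simp only [map_zsmul] at h2
      refine Eq.trans (congrArg (fun ψ : PontryaginDual G => Additive.ofMul (ψ ^ (Nf χ hχ w hw : ℤ)))
        (hcomp χ w δ).symm) ?_
      exact h2
end

section
/- Let G be a solenoid and F a finite subset of Ĝ. For every C > 0 there exists ε > 0 such that: whenever g ∈ G satisfies δ(φ(g)) < ε for all φ ∈ F (where δ(z) = inf{|t| : e^{2πit} = z}), there exists p ∈ L(G) with |p(φ)| < C for all φ ∈ F and φ(g) = φ(E(p)) for all φ ∈ F. -/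
/-- Clearing denominators of a rational number. -/
lemma rat_clear (q : ℚ) (m : ℤ) (h : (q.den : ℤ) ∣ m) : ∃ c : ℤ, (c : ℚ) = m * q := by
  obtain ⟨k, hk⟩ := h
  refine ⟨k * q.num, ?_⟩
  have hden : (q.den : ℚ) ≠ 0 := Nat.cast_ne_zero.mpr q.den_nz
  have h1 : (q.den : ℚ) * q = (q.num : ℚ) := by
    nth_rw 2 [← Rat.num_div_den q]
    field_simp
  rw [hk]
  push_cast
  linear_combination (-(k : ℚ)) * h1

/-- Let `G` be a solenoid, `E : L(G) → G` the homomorphism determined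
by `φ(E(p)) = e^{2πi p(φ)}`, and `F ⊆ Ĝ` finite.  For every `C > 0` there is `ε > 0`
such that whenever `g ∈ G` satisfies `δ(φ(g)) < ε` for all `φ ∈ F` (where
`δ(z) = inf {|t| : e^{2πit} = z}`), there exists `p ∈ L(G)` with `|p(φ)| < C` and
`φ(g) = φ(E(p))` for all `φ ∈ F`. -/
theorem small_on_F_lifts_through_E
    {G : Type*} [CommGroup G] [TopologicalSpace G] [IsTopologicalGroup G]
    [CompactSpace G] [ConnectedSpace G]
    (hrank : ∃ (n : ℕ) (f : Additive (PontryaginDual G) →+ (Fin n → ℚ)),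
      Function.Injective f)
    (E : LG G →+ Additive G)
    (hE : ∀ (p : LG G) (φ : PontryaginDual G),
      φ (Additive.toMul (E p)) = Circle.exp (2 * Real.pi * (p : PontryaginDual G → ℝ) φ))
    (F : Finset (PontryaginDual G)) :
    ∀ C : ℝ, 0 < C → ∃ ε : ℝ, 0 < ε ∧ ∀ g : G,
      (∀ φ ∈ F, sInf {r : ℝ | ∃ t : ℝ, r = |t| ∧ Circle.exp (2 * Real.pi * t) = φ g} < ε) →
      ∃ p : LG G, (∀ φ ∈ F, |(p : PontryaginDual G → ℝ) φ| < C) ∧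
        ∀ φ ∈ F, φ g = φ (Additive.toMul (E p)) := by
  classical
  obtain ⟨n, f, hf⟩ := hrank
  intro C hC
  -- the ℤ-linear map recording integer combinations of elements of F
  let σ : (↥F → ℤ) →ₗ[ℤ] Additive (PontryaginDual G) :=
    { toFun := fun c => ∑ φ : ↥F, c φ • Additive.ofMul (φ : PontryaginDual G)
      map_add' := by
        intro a b
        simp [add_smul, Finset.sum_add_distrib]
      map_smul' := by
        intro m a
        simp [Finset.smul_sum, smul_smul] }
  -- its kernel (the relations among F) is finitely generated
  obtain ⟨S, hS⟩ : (LinearMap.ker σ).FG := IsNoetherian.noetherian _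
  set M : ℝ := 1 + ∑ c ∈ S, ∑ φ : ↥F, |((c φ : ℤ) : ℝ)| with hM
  have hM1 : 1 ≤ M := by
    have : (0:ℝ) ≤ ∑ c ∈ S, ∑ φ : ↥F, |((c φ : ℤ) : ℝ)| :=
      Finset.sum_nonneg fun c _ => Finset.sum_nonneg fun φ _ => abs_nonneg _
    simp only [hM]; linarith
  have hM0 : 0 < M := lt_of_lt_of_le one_pos hM1
  have hhalf : (0:ℝ) < 1 / (2 * M) := by
    apply div_pos one_pos; linarith
  refine ⟨min C (1 / (2 * M)), lt_min hC hhalf, ?_⟩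
  set ε := min C (1 / (2 * M)) with hεdef
  have hεC : ε ≤ C := min_le_left _ _
  have hεM : ε ≤ 1 / (2 * M) := min_le_right _ _
  intro g hg
  -- choose small logarithms u φ for φ ∈ F
  have hu : ∀ φ : ↥F, ∃ t : ℝ, |t| < ε ∧ Circle.exp (2 * Real.pi * t) = (φ : PontryaginDual G) g := by
    intro φ
    have hne : {r : ℝ | ∃ t : ℝ, r = |t| ∧ Circle.exp (2 * Real.pi * t) = (φ : PontryaginDual G) g}.Nonempty := by
      refine ⟨|Complex.arg ((φ : PontryaginDual G) g) / (2 * Real.pi)|,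
        Complex.arg ((φ : PontryaginDual G) g) / (2 * Real.pi), rfl, ?_⟩
      have hπ : (2 * Real.pi) ≠ 0 := by positivity
      rw [mul_div_cancel₀ _ hπ]
      exact Circle.exp_arg _
    obtain ⟨r, hr, hrε⟩ := exists_lt_of_csInf_lt hne (hg φ φ.2)
    obtain ⟨t, rfl, ht2⟩ := hr
    exact ⟨t, hrε, ht2⟩
  choose u hu1 hu2 using hu
  -- evaluation at g as a monoid hom
  let ev : PontryaginDual G →* Circle :=
    { toFun := fun χ => χ g
      map_one' := rfl
      map_mul' := fun _ _ => rfl }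
  -- the ℤ-linear functional c ↦ ∑ c φ * u φ
  let ℓ : (↥F → ℤ) →ₗ[ℤ] ℝ :=
    { toFun := fun c => ∑ φ : ↥F, ((c φ : ℤ) : ℝ) * u φ
      map_add' := by
        intro a b
        simp [add_mul, Finset.sum_add_distrib]
      map_smul' := by
        intro m a
        simp [Finset.mul_sum, mul_assoc] }
  -- the key analytic fact: every relation in S kills u
  have hgen : ∀ c ∈ S, ℓ c = 0 := by
    intro c hcS
    have hcR : c ∈ LinearMap.ker σ := by
      rw [← hS]; exact Submodule.subset_span hcS
    have hσc : σ c = 0 := hcR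
    -- exp(2π ℓ c) = ∏ (φ g)^(c φ) = ev (toMul (σ c)) = 1
    have h1 : Circle.exp (2 * Real.pi * ℓ c) = 1 := by
      have e0 : 2 * Real.pi * ℓ c = ∑ φ : ↥F, c φ • (2 * Real.pi * u φ) := by
        show 2 * Real.pi * (∑ φ : ↥F, ((c φ : ℤ) : ℝ) * u φ) = _
        rw [Finset.mul_sum]
        refine Finset.sum_congr rfl fun φ _ => ?_
        rw [zsmul_eq_mul]; ring
      have e1 : Circle.exp (2 * Real.pi * ℓ c)
          = ∏ φ : ↥F, (Circle.exp (2 * Real.pi * u φ)) ^ (c φ) := by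
        rw [e0]
        have : Circle.exp (∑ φ : ↥F, c φ • (2 * Real.pi * u φ))
            = Additive.toMul (Circle.expHom (∑ φ : ↥F, c φ • (2 * Real.pi * u φ))) := rfl
        rw [this, map_sum, toMul_sum]
        refine Finset.prod_congr rfl fun φ _ => ?_
        rw [map_zsmul, toMul_zsmul]
        rfl
      have e2 : ∏ φ : ↥F, (Circle.exp (2 * Real.pi * u φ)) ^ (c φ)
          = ∏ φ : ↥F, ((φ : PontryaginDual G) g) ^ (c φ) := by
        refine Finset.prod_congr rfl fun φ _ => by rw [hu2]
      have e3 : ∏ φ : ↥F, ((φ : PontryaginDual G) g) ^ (c φ)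
          = ev (Additive.toMul (σ c)) := by
        show _ = ev (Additive.toMul (∑ φ : ↥F, c φ • Additive.ofMul (φ : PontryaginDual G)))
        rw [toMul_sum, map_prod]
        refine Finset.prod_congr rfl fun φ _ => ?_
        rw [toMul_zsmul, map_zpow]
        rfl
      rw [e1, e2, e3, hσc]
      rfl
    obtain ⟨k, hk⟩ := Circle.exp_eq_one.mp h1
    have hπ : (2 * Real.pi) ≠ 0 := by positivity
    have hℓk : ℓ c = (k : ℝ) := by
      have h2 : (2 * Real.pi) * ℓ c = (2 * Real.pi) * (k : ℝ) := by
        rw [hk]; ring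
      exact mul_left_cancel₀ hπ h2
    -- |ℓ c| < 1, so k = 0
    have hbound : |ℓ c| < 1 := by
      have habs : |ℓ c| ≤ ∑ φ : ↥F, |((c φ : ℤ) : ℝ)| * ε := by
        refine (Finset.abs_sum_le_sum_abs _ _).trans ?_
        refine Finset.sum_le_sum fun φ _ => ?_
        rw [abs_mul]
        exact mul_le_mul_of_nonneg_left (le_of_lt (hu1 φ)) (abs_nonneg _)
      have hA : ∑ φ : ↥F, |((c φ : ℤ) : ℝ)| * ε = (∑ φ : ↥F, |((c φ : ℤ) : ℝ)|) * ε := by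
        rw [Finset.sum_mul]
      set A := ∑ φ : ↥F, |((c φ : ℤ) : ℝ)| with hAdef
      have hA0 : 0 ≤ A := Finset.sum_nonneg fun φ _ => abs_nonneg _
      have hAM : A ≤ M - 1 := by
        have : A ≤ ∑ c' ∈ S, ∑ φ : ↥F, |((c' φ : ℤ) : ℝ)| :=
          Finset.single_le_sum (f := fun c' => ∑ φ : ↥F, |((c' φ : ℤ) : ℝ)|)
            (fun c' _ => Finset.sum_nonneg fun φ _ => abs_nonneg _) hcS
        simp only [hM]; linarith
      have hε0 : 0 < ε := lt_min hC hhalf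
      have : A * ε ≤ (M - 1) * (1 / (2 * M)) := by
        have h1 : A * ε ≤ A * (1 / (2 * M)) := mul_le_mul_of_nonneg_left hεM hA0
        have h2 : A * (1 / (2 * M)) ≤ (M - 1) * (1 / (2 * M)) :=
          mul_le_mul_of_nonneg_right hAM hhalf.le
        linarith
      have hlt : (M - 1) * (1 / (2 * M)) < 1 := by
        rw [mul_one_div, div_lt_one (by linarith)]
        linarith
      calc |ℓ c| ≤ A * ε := habs.trans_eq hA
        _ ≤ (M - 1) * (1 / (2 * M)) := this
        _ < 1 := hlt
    rw [hℓk] at hbound ⊢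
    have hk1 : |k| < 1 := by exact_mod_cast hbound
    have hk0 : k = 0 := Int.abs_lt_one_iff.mp hk1
    simp [hk0]
  have hℓker : ∀ c ∈ LinearMap.ker σ, ℓ c = 0 := by
    have hle : LinearMap.ker σ ≤ LinearMap.ker ℓ := by
      rw [← hS, Submodule.span_le]
      intro c hc
      exact hgen c hc
    intro c hc
    exact hle hc
  -- ℚ-linear algebra
  let τ : (↥F → ℚ) →ₗ[ℚ] (Fin n → ℚ) :=
    { toFun := fun q => ∑ φ : ↥F, q φ • f (Additive.ofMul (φ : PontryaginDual G))
      map_add' := by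
        intro a b
        simp [add_smul, Finset.sum_add_distrib]
      map_smul' := by
        intro m a
        simp [Finset.smul_sum, smul_smul] }
  let ℓq : (↥F → ℚ) →ₗ[ℚ] ℝ :=
    { toFun := fun q => ∑ φ : ↥F, ((q φ : ℚ) : ℝ) * u φ
      map_add' := by
        intro a b
        push_cast
        simp [add_mul, Finset.sum_add_distrib]
      map_smul' := by
        intro m a
        simp only [Pi.smul_apply, smul_eq_mul, RingHom.id_apply, Rat.smul_def,
          Finset.mul_sum]
        push_cast
        refine Finset.sum_congr rfl fun φ _ => by ring }
  have hτℓ : LinearMap.ker τ ≤ LinearMap.ker ℓq := by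
    intro q hq
    have hτq : τ q = 0 := hq
    set m : ℤ := ∏ φ : ↥F, ((q φ).den : ℤ) with hmdef
    have hm0 : (0:ℤ) < m := Finset.prod_pos (fun φ _ => by exact_mod_cast (q φ).pos)
    have hdvd : ∀ φ : ↥F, ((q φ).den : ℤ) ∣ m :=
      fun φ => Finset.dvd_prod_of_mem _ (Finset.mem_univ φ)
    choose c hc using fun φ : ↥F => rat_clear (q φ) m (hdvd φ)
    -- σ c = 0
    have hτc : ∑ φ : ↥F, ((c φ : ℚ)) • f (Additive.ofMul (φ : PontryaginDual G)) = 0 := by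
      have : ∑ φ : ↥F, ((c φ : ℚ)) • f (Additive.ofMul (φ : PontryaginDual G))
          = (m : ℚ) • τ q := by
        show _ = (m : ℚ) • ∑ φ : ↥F, q φ • f (Additive.ofMul (φ : PontryaginDual G))
        rw [Finset.smul_sum]
        refine Finset.sum_congr rfl fun φ _ => ?_
        rw [hc φ, smul_smul]
      rw [this, hτq, smul_zero]
    have hfσc : f (σ c) = 0 := by
      have e : f (σ c) = ∑ φ : ↥F, ((c φ : ℚ)) • f (Additive.ofMul (φ : PontryaginDual G)) := by
        show f (∑ φ : ↥F, c φ • Additive.ofMul (φ : PontryaginDual G)) = _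
        rw [map_sum]
        refine Finset.sum_congr rfl fun φ _ => ?_
        rw [map_zsmul, Int.cast_smul_eq_zsmul]
      rw [e, hτc]
    have hσc : σ c = 0 := hf (by rw [hfσc, map_zero])
    have hℓc : ℓ c = 0 := hℓker c hσc
    -- conclude ℓq q = 0
    have hmR : ((m : ℤ) : ℝ) ≠ 0 := by exact_mod_cast hm0.ne'
    have key : ((m : ℤ) : ℝ) * ℓq q = 0 := by
      have : ((m : ℤ) : ℝ) * ℓq q = ℓ c := by
        show ((m : ℤ) : ℝ) * (∑ φ : ↥F, ((q φ : ℚ) : ℝ) * u φ) = ∑ φ : ↥F, ((c φ : ℤ) : ℝ) * u φ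
        rw [Finset.mul_sum]
        refine Finset.sum_congr rfl fun φ _ => ?_
        have : ((c φ : ℤ) : ℝ) = ((m : ℤ) : ℝ) * ((q φ : ℚ) : ℝ) := by
          have := hc φ
          have h2 : ((c φ : ℚ) : ℝ) = (((m : ℤ) : ℚ) * q φ : ℚ) := by exact_mod_cast congrArg (fun x : ℚ => (x : ℝ)) this
          push_cast at h2 ⊢
          linarith
        rw [this]; ring
      rw [this, hℓc]
    have : ℓq q = 0 := by
      rcases mul_eq_zero.mp key with h | h
      · exact absurd h hmR
      · exact h
    exact this
  -- extend from range τ to all of ℚ^n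
  obtain ⟨π1, hπ1⟩ := (LinearMap.range τ).subtype.exists_leftInverse_of_injective
    (Submodule.ker_subtype _)
  let L : (Fin n → ℚ) →ₗ[ℚ] ℝ :=
    ((LinearMap.ker τ).liftQ ℓq hτℓ).comp
      (((τ.quotKerEquivRange.symm : LinearMap.range τ ≃ₗ[ℚ] _) :
        LinearMap.range τ →ₗ[ℚ] _).comp π1)
  have hL : ∀ q : ↥F → ℚ, L (τ q) = ℓq q := by
    intro q
    have h1 : π1 (τ q) = ⟨τ q, LinearMap.mem_range_self τ q⟩ := by
      have := DFunLike.congr_fun hπ1 (⟨τ q, LinearMap.mem_range_self τ q⟩ : LinearMap.range τ)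
      simpa using this
    show ((LinearMap.ker τ).liftQ ℓq hτℓ) (τ.quotKerEquivRange.symm (π1 (τ q))) = ℓq q
    rw [h1]
    rw [show (⟨τ q, LinearMap.mem_range_self τ q⟩ : LinearMap.range τ)
        = ⟨τ q, LinearMap.mem_range_self τ q⟩ from rfl]
    rw [LinearMap.quotKerEquivRange_symm_apply_image τ q (LinearMap.mem_range_self τ q)]
    simp [Submodule.liftQ_apply]
  -- define p
  let p : PontryaginDual G → ℝ := fun χ => L (f (Additive.ofMul χ))
  have hp : p ∈ LG G := by
    intro χ ψ
    show L (f (Additive.ofMul (χ * ψ))) = L (f (Additive.ofMul χ)) + L (f (Additive.ofMul ψ))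
    have : Additive.ofMul (χ * ψ) = Additive.ofMul χ + Additive.ofMul ψ := rfl
    rw [this, map_add, map_add]
  have hval : ∀ φ : ↥F, p (φ : PontryaginDual G) = u φ := by
    intro φ
    have hsingle : τ (Pi.single φ 1) = f (Additive.ofMul (φ : PontryaginDual G)) := by
      have hd : τ (Pi.single φ 1)
          = ∑ ψ : ↥F, (Pi.single φ 1 : ↥F → ℚ) ψ • f (Additive.ofMul (ψ : PontryaginDual G)) := rfl
      rw [hd, Finset.sum_eq_single φ]
      · simp
      · intro ψ _ hψ
        rw [Pi.single_eq_of_ne hψ, zero_smul]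
      · intro h
        exact absurd (Finset.mem_univ φ) h
    have : p (φ : PontryaginDual G) = L (τ (Pi.single φ 1)) := by
      show L (f (Additive.ofMul (φ : PontryaginDual G))) = _
      rw [hsingle]
    rw [this, hL]
    have hd2 : ℓq (Pi.single φ 1)
        = ∑ ψ : ↥F, (((Pi.single φ 1 : ↥F → ℚ) ψ : ℚ) : ℝ) * u ψ := rfl
    rw [hd2, Finset.sum_eq_single φ]
    · simp
    · intro ψ _ hψ
      rw [Pi.single_eq_of_ne hψ]
      simp
    · intro h
      exact absurd (Finset.mem_univ φ) h
  refine ⟨⟨p, hp⟩, ?_, ?_⟩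
  · intro φ hφ
    show |p φ| < C
    rw [hval ⟨φ, hφ⟩]
    exact lt_of_lt_of_le (hu1 ⟨φ, hφ⟩) hεC
  · intro φ hφ
    rw [hE ⟨p, hp⟩ φ]
    show φ g = Circle.exp (2 * Real.pi * p φ)
    rw [hval ⟨φ, hφ⟩]
    exact (hu2 ⟨φ, hφ⟩).symm
end
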